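/- arXiv:2105.02854 — 9 statements merged into one kernel-verified Lean document; each statement's English description precedes it below -/
import Mathlib

section
/- Let D be a square-free integer with D ≠ 1, and let I ⊆ ℤ[√D] be an ideal (as a ℤ-submodule of rank 2) that is not divisible by any rational integer greater than 1. Then I has a ℤ-basis of the form {√D + μ, m}, where m > 0 is a positive integer and μ is an integer satisfying μ² ≡ D (mod m). Conversely, for any positive integer m and integer μ with μ² ≡ D (mod m), the ℤ-submodule of ℤ[√D] with ℤ-basis {√D + μ, m} is an ideal of ℤ[√D]. -/
/-- An ideal `I` of `ℤ[√D]` is *primitive* (not divisible by any rational integer `a > 1`)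
if there is no integer `a > 1` dividing every element of `I`. -/
def PrimitiveIdeal {D : ℤ} (I : Ideal (Zsqrtd D)) : Prop :=
  ¬ ∃ a : ℤ, 1 < a ∧ ∀ x ∈ I, (a : Zsqrtd D) ∣ x

/-- The ℤ-submodule of `ℤ[√D]` spanned by `√D + μ` and `m`. -/
def rootLattice (D m μ : ℤ) : Submodule ℤ (Zsqrtd D) :=
  Submodule.span ℤ {Zsqrtd.sqrtd + (μ : Zsqrtd D), (m : Zsqrtd D)}

/-!
A primitive ideal `I` contains an element with imaginary part `1`: the imaginary parts of `I`
form an ideal `gℤ`, and since `√d · x ∈ I` has imaginary part `x.re`, the integer `g` divides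
every element of `I`, so `g = ±1` by primitivity. Write that element as `√d + μ` and
`I ∩ ℤ = mℤ`, where `m ≠ 0` because `d` is not a square, so the norm of a nonzero element of `I`
is a nonzero integer in `I`. Every `x ∈ I` is `x.im · (√d + μ)` plus an element of `I ∩ ℤ`, and
the norm `μ² - d` of `√d + μ` lies in `mℤ`. Conversely the lattice spanned by `√d + μ` and `m`
is stable under multiplication by `√d` when `m ∣ d - μ²`, and `1, √d` generate `ℤ[√d]`
as a ring.
-/

theorem Squarefree.ne_mul_self {d : ℤ} (hd : Squarefree d) (hd1 : d ≠ 1) (n : ℤ) : d ≠ n * n := by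
  rintro rfl
  rcases Int.isUnit_iff.mp (hd n dvd_rfl) with rfl | rfl <;> simp at hd1

namespace Zsqrtd

def imLinearMap (d : ℤ) : ℤ√d →ₗ[ℤ] ℤ where
  toFun x := x.im
  map_add' := im_add
  map_smul' n x := by simp

variable {d : ℤ}

theorem eq_intCast_re_of_im_eq_zero {x : ℤ√d} (hx : x.im = 0) : x = (x.re : ℤ√d) := by
  ext <;> simp [hx]

theorem exists_ideal_restrictScalars_eq {L : Submodule ℤ (ℤ√d)}
    (hL : ∀ x ∈ L, sqrtd * x ∈ L) : ∃ J : Ideal (ℤ√d), J.restrictScalars ℤ = L := by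
  refine ⟨{ L with smul_mem' := fun r x hx => ?_ }, rfl⟩
  have hr : r * x = r.re • x + r.im • (sqrtd * x) := by
    ext <;> simp
    ring
  rw [smul_eq_mul, hr]
  exact L.add_mem (L.smul_mem _ hx) (L.smul_mem _ (hL x hx))

theorem exists_pos_intCast_mem_iff (hd : ∀ n : ℤ, d ≠ n * n) {I : Ideal (ℤ√d)} (hI : I ≠ ⊥) :
    ∃ m : ℤ, 0 < m ∧ ∀ a : ℤ, (a : ℤ√d) ∈ I ↔ m ∣ a := by
  obtain ⟨m, hm⟩ := (IsPrincipalIdealRing.principal (I.comap (Int.castRingHom (ℤ√d)))).principal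
  have hmem (a : ℤ) : (a : ℤ√d) ∈ I ↔ m ∣ a := by
    rw [← Ideal.mem_span_singleton, ← Ideal.submodule_span_eq, ← hm]
    rfl
  obtain ⟨z, hz, hz0⟩ := (Submodule.ne_bot_iff I).mp hI
  have hm0 : m ≠ 0 := by
    rintro rfl
    have hnorm := (hmem z.norm).mp (by rw [norm_eq_mul_conj]; exact I.mul_mem_right _ hz)
    exact hz0 ((norm_eq_zero hd z).mp (zero_dvd_iff.mp hnorm))
  exact ⟨m.natAbs, by omega, fun a => by rw [hmem, Int.natAbs_dvd]⟩

end Zsqrtd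

open Zsqrtd

theorem PrimitiveIdeal.isUnit_of_forall_dvd {d : ℤ} {I : Ideal (ℤ√d)} (hI : PrimitiveIdeal I)
    {g : ℤ} (hg : ∀ x ∈ I, (g : ℤ√d) ∣ x) : IsUnit g := by
  by_contra hu
  obtain ⟨p, hp, hpg⟩ := Nat.exists_prime_and_dvd (mt Int.isUnit_iff_natAbs_eq.mpr hu)
  refine hI ⟨p, by exact_mod_cast hp.one_lt, fun x hx => ?_⟩
  exact (Int.cast_dvd_cast _ _ (Int.natCast_dvd.mpr hpg)).trans (hg x hx)

theorem PrimitiveIdeal.exists_im_eq_one {d : ℤ} {I : Ideal (ℤ√d)} (hI : PrimitiveIdeal I) :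
    ∃ β ∈ I, β.im = 1 := by
  obtain ⟨g, hg⟩ :=
    (IsPrincipalIdealRing.principal ((I.restrictScalars ℤ).map (imLinearMap d))).principal
  have hg_dvd_im (x : ℤ√d) (hx : x ∈ I) : g ∣ x.im := by
    rw [← Ideal.mem_span_singleton, ← Ideal.submodule_span_eq, ← hg]
    exact ⟨x, hx, rfl⟩
  have hg_dvd (x : ℤ√d) (hx : x ∈ I) : (g : ℤ√d) ∣ x := by
    refine (intCast_dvd _ _).mpr ⟨?_, hg_dvd_im x hx⟩
    simpa using hg_dvd_im _ (I.mul_mem_left sqrtd hx)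
  have hone : (1 : ℤ) ∈ (I.restrictScalars ℤ).map (imLinearMap d) := by
    rw [hg, Ideal.submodule_span_eq, Ideal.mem_span_singleton]
    exact (hI.isUnit_of_forall_dvd hg_dvd).dvd
  exact hone

section rootLattice

variable {d m μ : ℤ}

theorem sqrtd_mul_mem_rootLattice (h : m ∣ d - μ ^ 2) {x : ℤ√d} (hx : x ∈ rootLattice d m μ) :
    sqrtd * x ∈ rootLattice d m μ := by
  obtain ⟨k, hk⟩ := h
  suffices rootLattice d m μ ≤ (rootLattice d m μ).comap (LinearMap.mulLeft ℤ sqrtd) from this hx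
  refine Submodule.span_le.mpr ?_
  rintro _ (rfl | rfl) <;> refine Submodule.mem_span_pair.mpr ?_
  · exact ⟨μ, k, by ext <;> simp; linear_combination -hk⟩
  · exact ⟨m, -μ, by ext <;> simp; ring⟩

theorem restrictScalars_eq_rootLattice {I : Ideal (ℤ√d)} (hβ : sqrtd + (μ : ℤ√d) ∈ I)
    (hm : ∀ a : ℤ, (a : ℤ√d) ∈ I ↔ m ∣ a) : I.restrictScalars ℤ = rootLattice d m μ := by
  refine le_antisymm (fun x hx => ?_) (Submodule.span_le.mpr ?_)
  · set y := x - (x.im : ℤ√d) * (sqrtd + (μ : ℤ√d))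
    have hy : y = (y.re : ℤ√d) := eq_intCast_re_of_im_eq_zero (by simp [y])
    obtain ⟨s, hs⟩ := (hm y.re).mp (by rw [← hy]; exact I.sub_mem hx (I.mul_mem_left _ hβ))
    refine Submodule.mem_span_pair.mpr ⟨x.im, s, ?_⟩
    rw [zsmul_eq_mul, zsmul_eq_mul, ← Int.cast_mul, mul_comm s, ← hs, ← hy]
    exact add_sub_cancel _ _
  · rintro _ (rfl | rfl)
    exacts [hβ, (hm m).mpr dvd_rfl]

theorem sq_modEq_of_mem {I : Ideal (ℤ√d)} (hβ : sqrtd + (μ : ℤ√d) ∈ I)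
    (hm : ∀ a : ℤ, (a : ℤ√d) ∈ I ↔ m ∣ a) : μ ^ 2 ≡ d [ZMOD m] := by
  have hnorm := (hm _).mp (norm_eq_mul_conj (sqrtd + (μ : ℤ√d)) ▸ I.mul_mem_right _ hβ)
  refine (Int.modEq_iff_dvd.mpr ?_).symm
  simpa [norm_def, sq] using hnorm

end rootLattice

/-- For `D` squarefree, `D ≠ 1`, every nonzero primitive ideal of `ℤ[√D]` has a
ℤ-basis `{√D + μ, m}` with `m > 0` and `μ² ≡ D (mod m)`; conversely every such span is an
ideal of `ℤ[√D]`. -/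
theorem stmt_0 (D : ℤ) (hD : Squarefree D) (hD1 : D ≠ 1) :
    (∀ I : Ideal (Zsqrtd D), I ≠ ⊥ → PrimitiveIdeal I →
      ∃ m μ : ℤ, 0 < m ∧ μ ^ 2 ≡ D [ZMOD m] ∧
        I.restrictScalars ℤ = rootLattice D m μ) ∧
    (∀ m μ : ℤ, 0 < m → μ ^ 2 ≡ D [ZMOD m] →
      ∃ J : Ideal (Zsqrtd D), J.restrictScalars ℤ = rootLattice D m μ) := by
  refine ⟨fun I hI hprim => ?_, fun m μ _ hmod => ?_⟩
  · obtain ⟨m, hm0, hm⟩ := exists_pos_intCast_mem_iff (hD.ne_mul_self hD1) hI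
    obtain ⟨β, hβ, hβ1⟩ := hprim.exists_im_eq_one
    have hβ_eq : β = sqrtd + (β.re : ℤ√D) := by ext <;> simp [hβ1]
    rw [hβ_eq] at hβ
    exact ⟨m, β.re, hm0, sq_modEq_of_mem hβ hm, restrictScalars_eq_rootLattice hβ hm⟩
  · exact exists_ideal_restrictScalars_eq fun x => sqrtd_mul_mem_rootLattice hmod.dvd
end

section
/- For u, v, s ∈ ℝ with v, s > 0, consider the matrix g⁻¹ = n(u)·a(v)·k(π/2)·a(s)⁻¹ in SL(2,ℝ), where n(u) = [[1,u],[0,1]], a(v) = [[√v,0],[0,1/√v]], and k(θ) = [[cos(θ/2), −sin(θ/2)],[sin(θ/2), cos(θ/2)]]. Then the Iwasawa coordinates (x, y, θ) of g⁻¹, defined by g⁻¹ = n(x)·a(y)·k(θ), are given by x = u − v·(s² − 1)/(s² + 1), y = 2sv/(s² + 1), and θ = 2·arctan(1/s). -/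
open Real Matrix

/-- Upper unipotent matrix `n(x)`. -/
noncomputable def nMat (x : ℝ) : Matrix (Fin 2) (Fin 2) ℝ := !![1, x; 0, 1]

/-- Diagonal matrix `a(y) = diag(√y, 1/√y)`. -/
noncomputable def aMat (y : ℝ) : Matrix (Fin 2) (Fin 2) ℝ :=
  !![Real.sqrt y, 0; 0, 1 / Real.sqrt y]

/-- Rotation matrix `k(θ)`. -/
noncomputable def kMat (θ : ℝ) : Matrix (Fin 2) (Fin 2) ℝ :=
  !![Real.cos (θ / 2), -Real.sin (θ / 2); Real.sin (θ / 2), Real.cos (θ / 2)]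

/-! Since `a(v)` conjugates `n(x)` to `n(v x)` and `a` is multiplicative, the factors `n(u) a(v)`
pass through unchanged, and everything reduces to the Iwasawa decomposition of `k(π/2) a(t)` with
`t = 1/s`. That one is a direct `2 × 2` computation once `k(2 arctan t)` is written as
`(1 + t²)^(-1/2) [[1, -t], [t, 1]]`. -/

lemma nMat_mul_nMat (x x' : ℝ) : nMat x * nMat x' = nMat (x + x') := by
  simp [nMat, add_comm]

lemma aMat_mul_aMat {y : ℝ} (hy : 0 ≤ y) (y' : ℝ) : aMat y * aMat y' = aMat (y * y') := by
  simp [aMat, Real.sqrt_mul hy, mul_comm]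

lemma aMat_mul_nMat (y x : ℝ) : aMat y * nMat x = nMat (y * x) * aMat y := by
  have h : √y * x = y * x * (1 / √y) := by
    rw [mul_one_div, mul_comm y, mul_div_assoc, Real.div_sqrt, mul_comm]
  simp [aMat, nMat, h]

lemma inv_aMat {s : ℝ} (hs : 0 < s) : (aMat s)⁻¹ = aMat s⁻¹ := by
  apply Matrix.inv_eq_right_inv
  rw [aMat_mul_aMat hs.le, mul_inv_cancel₀ hs.ne']
  simp [aMat, Matrix.one_fin_two]

lemma kMat_pi_div_two : kMat (π / 2) = !![√2 / 2, -(√2 / 2); √2 / 2, √2 / 2] := by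
  rw [kMat, show π / 2 / 2 = π / 4 by ring, cos_pi_div_four, sin_pi_div_four]

lemma kMat_two_mul_arctan (t : ℝ) :
    kMat (2 * arctan t) = (√(1 + t ^ 2))⁻¹ • !![1, -t; t, 1] := by
  rw [kMat, mul_div_cancel_left₀ _ two_ne_zero, cos_arctan, sin_arctan]
  ext i j
  fin_cases i <;> fin_cases j <;> simp [div_eq_inv_mul]

lemma kMat_pi_div_two_mul_aMat {t : ℝ} (ht : 0 < t) :
    kMat (π / 2) * aMat t =
      nMat ((t ^ 2 - 1) / (1 + t ^ 2)) * aMat (2 * t / (1 + t ^ 2)) * kMat (2 * arctan t) := by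
  have hq : 0 < 1 + t ^ 2 := by positivity
  have hsqrt_t : 0 < √t := Real.sqrt_pos.2 ht
  have hsqrt_q : 0 < √(1 + t ^ 2) := Real.sqrt_pos.2 hq
  have h2 : √2 ^ 2 = 2 := Real.sq_sqrt zero_le_two
  have ht' : √t ^ 2 = t := Real.sq_sqrt ht.le
  have hq' : √(1 + t ^ 2) ^ 2 = 1 + t ^ 2 := Real.sq_sqrt hq.le
  have hy : √(2 * t / (1 + t ^ 2)) = √2 * √t / √(1 + t ^ 2) := by
    rw [Real.sqrt_div (by positivity), Real.sqrt_mul zero_le_two]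
  rw [kMat_pi_div_two, kMat_two_mul_arctan, aMat, aMat, nMat, hy]
  ext i j
  fin_cases i <;> fin_cases j <;> simp [Matrix.mul_apply, Fin.sum_univ_succ] <;> field_simp <;>
    simp only [h2, ht', hq'] <;> ring

/-- the Iwasawa coordinates of `g⁻¹ = n(u)·a(v)·k(π/2)·a(s)⁻¹` are
`x = u − v(s²−1)/(s²+1)`, `y = 2sv/(s²+1)`, `θ = 2 arctan(1/s)`. -/
theorem stmt_2 (u v s : ℝ) (hv : 0 < v) (hs : 0 < s) :
    nMat u * aMat v * kMat (Real.pi / 2) * (aMat s)⁻¹ =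
      nMat (u - v * (s ^ 2 - 1) / (s ^ 2 + 1)) * aMat (2 * s * v / (s ^ 2 + 1)) *
        kMat (2 * Real.arctan (1 / s)) := by
  have hx : u + v * ((s⁻¹ ^ 2 - 1) / (1 + s⁻¹ ^ 2)) = u - v * (s ^ 2 - 1) / (s ^ 2 + 1) := by
    field_simp; ring
  have hy : v * (2 * s⁻¹ / (1 + s⁻¹ ^ 2)) = 2 * s * v / (s ^ 2 + 1) := by
    field_simp
  calc nMat u * aMat v * kMat (π / 2) * (aMat s)⁻¹
      = nMat u * (aMat v * nMat ((s⁻¹ ^ 2 - 1) / (1 + s⁻¹ ^ 2))) *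
          aMat (2 * s⁻¹ / (1 + s⁻¹ ^ 2)) * kMat (2 * arctan s⁻¹) := by
        rw [inv_aMat hs, mul_assoc _ (kMat _), kMat_pi_div_two_mul_aMat (inv_pos.2 hs)]
        simp only [mul_assoc]
    _ = nMat (u + v * ((s⁻¹ ^ 2 - 1) / (1 + s⁻¹ ^ 2))) *
          aMat (v * (2 * s⁻¹ / (1 + s⁻¹ ^ 2))) * kMat (2 * arctan s⁻¹) := by
        rw [aMat_mul_nMat, ← mul_assoc, nMat_mul_nMat, mul_assoc _ (aMat v), aMat_mul_aMat hv.le]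
    _ = _ := by rw [hx, hy, one_div]
end

section
/- Define for q ∈ ℝ, |q| > 1 or |q| < 1, the functions h_q(s) = log((s+q)/(1−s²)), s₁(q,v) = (−q + √(v²+q²−1))/(v+1), and s₂(q,v) = v − q − √(v²+q²−1). Then for q > 1 and v > 0 sufficiently small, h_q(s₁(q,v)) − h_q(−q + √(q²−1)) = ((q − √(q²−1))/(2√(q²−1)))·v² + O(v³/q²), where the implied constant is absolute for q bounded away from 1. -/
open Real

/-!
With `r = √(q² - 1)`, the point `s₀ = -q + r` is a critical point of `h_q`, and `s₀ + q = r`,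
`1 - s₀² = 2r(q - r)`. This makes the increment exact:
`h_q(s₀ + t) - h_q(s₀) = -log (1 - y)` with `y = t² / (2(q - r)(r + t))`.
For `s₁ = s₀ + t` one finds `t = ((q - r)v + (√(v² + r²) - r)) / (1 + v) = (q - r)v + O(v²/r)`,
hence `y = (q - r)v²/(2r) + O((q + r)v³/r³)`, and `-log (1 - y) = y + O(y²)`.
Since `r ≥ ηq/(1 + η)` for `q ≥ 1 + η`, every error term is `O(v³/q²)`.
-/

/-- `h_q(s) = log((s+q)/(1−s²))`. -/
noncomputable def hFun (q s : ℝ) : ℝ := Real.log ((s + q) / (1 - s ^ 2))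

/-- `s₁(q,v) = (−q + √(v²+q²−1))/(v+1)`. -/
noncomputable def s1Fun (q v : ℝ) : ℝ := (-q + Real.sqrt (v ^ 2 + q ^ 2 - 1)) / (v + 1)

theorem abs_neg_log_one_sub_sub_le {y : ℝ} (hy : |y| ≤ 1 / 2) :
    |-log (1 - y) - y| ≤ 2 * y ^ 2 := by
  have h := abs_log_sub_add_sum_range_le (hy.trans_lt (by norm_num)) 1
  simp only [Finset.range_one, Finset.sum_singleton, zero_add, pow_one, Nat.cast_zero,
    div_one] at h
  calc |-log (1 - y) - y| = |y + log (1 - y)| := by rw [← abs_neg]; ring_nf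
    _ ≤ |y| ^ 2 / (1 - |y|) := h
    _ ≤ 2 * y ^ 2 := by
      rw [div_le_iff₀ (by linarith), sq_abs]
      nlinarith [sq_nonneg y]

section

variable {q r : ℝ}

theorem hFun_crit_add_sub_hFun_crit (hr : r ^ 2 = q ^ 2 - 1) (hr0 : r ≠ 0) {t : ℝ}
    (hrt : r + t ≠ 0) (hy : 1 - t ^ 2 / (2 * (q - r) * (r + t)) ≠ 0) :
    hFun q (-q + r + t) - hFun q (-q + r) = -log (1 - t ^ 2 / (2 * (q - r) * (r + t))) := by
  have hp : q - r ≠ 0 := by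
    rintro h
    obtain rfl : q = r := by linarith
    nlinarith
  have h2p : (2 * (q - r))⁻¹ ≠ 0 := by simpa using hp
  have hcrit : r / (1 - (-q + r) ^ 2) = (2 * (q - r))⁻¹ := by
    rw [show 1 - (-q + r) ^ 2 = r * (2 * (q - r)) by linear_combination hr]
    field_simp
  have hshift : (r + t) / (1 - (-q + r + t) ^ 2)
      = (2 * (q - r))⁻¹ * (1 - t ^ 2 / (2 * (q - r) * (r + t)))⁻¹ := by
    rw [show 1 - (-q + r + t) ^ 2 = 2 * (q - r) * (r + t) - t ^ 2 by linear_combination hr]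
    field_simp
  simp only [hFun, show -q + r + t + q = r + t by ring, show -q + r + q = r by ring, hcrit,
    hshift, log_mul h2p (inv_ne_zero hy), log_inv]
  ring

theorem s1Fun_eq_crit_add (hr : r ^ 2 = q ^ 2 - 1) {v : ℝ} (hv : v + 1 ≠ 0) :
    s1Fun q v = -q + r + ((q - r) * v + (√(v ^ 2 + r ^ 2) - r)) / (v + 1) := by
  rw [s1Fun, hr, add_sub_assoc]
  field_simp
  ring

theorem sub_pos_and_two_mul_mul_sub_le_one (hr : r ^ 2 = q ^ 2 - 1) (hr0 : 0 < r) (hq : 0 ≤ q) :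
    0 < q - r ∧ 2 * r * (q - r) ≤ 1 := by
  have hrq : r < q := by nlinarith
  exact ⟨by linarith, by nlinarith⟩

theorem sqrt_sq_add_sq_sub_le (hr0 : 0 < r) (v : ℝ) : √(v ^ 2 + r ^ 2) - r ≤ v ^ 2 / (2 * r) := by
  have hw : √(v ^ 2 + r ^ 2) ^ 2 = v ^ 2 + r ^ 2 := sq_sqrt (by positivity)
  have hrw : r ≤ √(v ^ 2 + r ^ 2) := le_sqrt_of_sq_le (by nlinarith)
  rw [le_div_iff₀ (by positivity)]
  nlinarith

theorem crit_increment_bounds (hr : r ^ 2 = q ^ 2 - 1) (hr0 : 0 < r) (hq : 0 ≤ q) {v : ℝ}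
    (hv : 0 ≤ v) :
    let t := ((q - r) * v + (√(v ^ 2 + r ^ 2) - r)) / (v + 1)
    0 ≤ t ∧ |t - (q - r) * v| ≤ v ^ 2 / (2 * r) := by
  intro t
  obtain ⟨hp, h2rp⟩ := sub_pos_and_two_mul_mul_sub_le_one hr hr0 hq
  have hd0 : 0 ≤ √(v ^ 2 + r ^ 2) - r := sub_nonneg.2 (le_sqrt_of_sq_le (by nlinarith))
  have hd1 := sqrt_sq_add_sq_sub_le hr0 v
  have hpv : (q - r) * v ^ 2 ≤ v ^ 2 / (2 * r) := by
    rw [le_div_iff₀ (by positivity)]; nlinarith [sq_nonneg v]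
  have ht : t - (q - r) * v = (√(v ^ 2 + r ^ 2) - r - (q - r) * v ^ 2) / (v + 1) := by
    simp only [t]; field_simp; ring
  refine ⟨by positivity, ?_⟩
  rw [ht, abs_div, abs_of_pos (show 0 < v + 1 by linarith)]
  exact (div_le_self (abs_nonneg _) (by linarith)).trans
    (abs_sub_le_of_nonneg_of_le hd0 hd1 (by positivity) hpv)

theorem mul_le_of_abs_sub_mul_le (hr : r ^ 2 = q ^ 2 - 1) (hr0 : 0 < r) (hq : 0 ≤ q) {t v : ℝ}
    (htv : |t - (q - r) * v| ≤ v ^ 2 / (2 * r)) (hv0 : 0 ≤ v) (hv1 : v ≤ 1) : r * t ≤ v := by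
  have h2rp := (sub_pos_and_two_mul_mul_sub_le_one hr hr0 hq).2
  have := (abs_le.1 htv).2
  rw [le_div_iff₀ (by positivity)] at this
  nlinarith [mul_le_mul_of_nonneg_right h2rp hv0]

theorem crit_quotient_le (hr : r ^ 2 = q ^ 2 - 1) (hr0 : 0 < r) (hq : 0 ≤ q) {t v : ℝ}
    (ht : 0 ≤ t) (hrt : r * t ≤ v) :
    t ^ 2 / (2 * (q - r) * (r + t)) ≤ (q + r) * v ^ 2 / (2 * r ^ 3) := by
  have hp := (sub_pos_and_two_mul_mul_sub_le_one hr hr0 hq).1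
  calc t ^ 2 / (2 * (q - r) * (r + t)) ≤ t ^ 2 / (2 * (q - r) * r) :=
        div_le_div_of_nonneg_left (sq_nonneg t) (by positivity) (by nlinarith)
    _ ≤ (v / r) ^ 2 / (2 * (q - r) * r) := by
        gcongr
        rw [le_div_iff₀ hr0]; linarith
    _ = (q + r) * v ^ 2 / (2 * r ^ 3) := by
        field_simp
        linear_combination v ^ 2 * hr

theorem abs_crit_quotient_sub_le (hr : r ^ 2 = q ^ 2 - 1) (hr0 : 0 < r) (hq : 0 ≤ q) {t v : ℝ}
    (ht : 0 ≤ t) (htv : |t - (q - r) * v| ≤ v ^ 2 / (2 * r)) (hv0 : 0 ≤ v) (hrt : r * t ≤ v) :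
    |t ^ 2 / (2 * (q - r) * (r + t)) - (q - r) / (2 * r) * v ^ 2| ≤ (q + r) * v ^ 3 / r ^ 3 := by
  obtain ⟨hp, h2rp⟩ := sub_pos_and_two_mul_mul_sub_le_one hr hr0 hq
  have hre : r * |t - (q - r) * v| ≤ v ^ 2 / 2 := by
    rw [le_div_iff₀ (by positivity)] at htv; linarith
  have hsplit : |r * t ^ 2 - (q - r) ^ 2 * v ^ 2 * (r + t)|
      ≤ r * |t - (q - r) * v| * (t + (q - r) * v) + (q - r) ^ 2 * v ^ 2 * t := by
    rw [show r * t ^ 2 - (q - r) ^ 2 * v ^ 2 * (r + t)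
      = r * (t - (q - r) * v) * (t + (q - r) * v) - (q - r) ^ 2 * v ^ 2 * t by ring]
    refine (abs_sub _ _).trans_eq ?_
    rw [abs_of_nonneg (by positivity : 0 ≤ (q - r) ^ 2 * v ^ 2 * t), abs_mul, abs_mul,
      abs_of_pos hr0, abs_of_nonneg (by positivity : 0 ≤ t + (q - r) * v)]
  have hN : |r * t ^ 2 - (q - r) ^ 2 * v ^ 2 * (r + t)| ≤ 2 * v ^ 3 / r := by
    have hsum : r * (t + (q - r) * v) ≤ 3 * v / 2 := by nlinarith
    have hp2 : (q - r) ^ 2 * v ^ 2 * (r * t) ≤ v ^ 2 * v :=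
      mul_le_mul (mul_le_of_le_one_left (sq_nonneg v) (by nlinarith)) hrt (by positivity)
        (by positivity)
    rw [le_div_iff₀ hr0]
    nlinarith [mul_le_mul hre hsum (by positivity) (by positivity)]
  calc |t ^ 2 / (2 * (q - r) * (r + t)) - (q - r) / (2 * r) * v ^ 2|
      = |r * t ^ 2 - (q - r) ^ 2 * v ^ 2 * (r + t)| / (2 * (q - r) * r * (r + t)) := by
        rw [← abs_of_pos (show 0 < 2 * (q - r) * r * (r + t) by positivity), ← abs_div]
        congr 1
        field_simp
    _ ≤ (2 * v ^ 3 / r) / (2 * (q - r) * r * r) := by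
        gcongr
        linarith
    _ = (q + r) * v ^ 3 / r ^ 3 := by
        field_simp
        linear_combination v ^ 3 * hr

theorem abs_hFun_s1Fun_sub_le (hr : r ^ 2 = q ^ 2 - 1) (hr0 : 0 < r) (hq : 0 ≤ q) {v : ℝ}
    (hv0 : 0 ≤ v) (hv1 : v ≤ 1) (hsmall : (q + r) * v ≤ r ^ 3) :
    |hFun q (s1Fun q v) - hFun q (-q + r) - (q - r) / (2 * r) * v ^ 2|
      ≤ 2 * (q + r) * v ^ 3 / r ^ 3 := by
  obtain ⟨ht0, htv⟩ := crit_increment_bounds hr hr0 hq hv0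
  set t := ((q - r) * v + (√(v ^ 2 + r ^ 2) - r)) / (v + 1)
  have hrt := mul_le_of_abs_sub_mul_le hr hr0 hq htv hv0 hv1
  have hy_le := crit_quotient_le hr hr0 hq ht0 hrt
  have hy_err := abs_crit_quotient_sub_le hr hr0 hq ht0 htv hv0 hrt
  set y := t ^ 2 / (2 * (q - r) * (r + t))
  have hy0 : 0 ≤ y := by
    have := (sub_pos_and_two_mul_mul_sub_le_one hr hr0 hq).1
    positivity
  have hyv : y ≤ v / 2 := by
    refine hy_le.trans ?_
    rw [div_le_div_iff₀ (by positivity) (by norm_num)]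
    nlinarith
  rw [s1Fun_eq_crit_add hr (by linarith), hFun_crit_add_sub_hFun_crit hr hr0.ne' (by positivity)
    (by linarith)]
  calc |-log (1 - y) - (q - r) / (2 * r) * v ^ 2|
      ≤ |-log (1 - y) - y| + |y - (q - r) / (2 * r) * v ^ 2| := abs_sub_le _ _ _
    _ ≤ 2 * y ^ 2 + (q + r) * v ^ 3 / r ^ 3 :=
        add_le_add (abs_neg_log_one_sub_sub_le (by rw [abs_of_nonneg hy0]; linarith)) hy_err
    _ ≤ 2 * (q + r) * v ^ 3 / r ^ 3 := by
        have hy2 : 2 * y ^ 2 ≤ (q + r) * v ^ 3 / r ^ 3 / 2 := calc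
          2 * y ^ 2 = 2 * y * y := by ring
          _ ≤ 2 * (v / 2) * ((q + r) * v ^ 2 / (2 * r ^ 3)) := by gcongr
          _ = (q + r) * v ^ 3 / r ^ 3 / 2 := by ring
        have : 0 ≤ (q + r) * v ^ 3 / r ^ 3 := by positivity
        rw [show 2 * (q + r) * v ^ 3 / r ^ 3 = 2 * ((q + r) * v ^ 3 / r ^ 3) by ring]
        linarith

end

theorem mul_le_sqrt_sq_sub_one {η q : ℝ} (hη : 0 < η) (hq : 1 + η ≤ q) :
    η / (1 + η) * q ≤ √(q ^ 2 - 1) := by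
  apply le_sqrt_of_sq_le
  rw [mul_pow, div_pow, div_mul_eq_mul_div, div_le_iff₀ (by positivity)]
  nlinarith [mul_le_mul hq hq (by positivity) (by linarith)]

/-- for `q ≥ 1 + η` and `v > 0` small,
`h_q(s₁(q,v)) − h_q(−q+√(q²−1)) = ((q−√(q²−1))/(2√(q²−1)))·v² + O(v³/q²)`,
uniformly in `q`. -/
theorem stmt_8 (η : ℝ) (hη : 0 < η) :
    ∃ C > 0, ∃ v₀ > 0, ∀ q : ℝ, 1 + η ≤ q → ∀ v : ℝ, 0 < v → v ≤ v₀ →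
      |hFun q (s1Fun q v) - hFun q (-q + Real.sqrt (q ^ 2 - 1)) -
        (q - Real.sqrt (q ^ 2 - 1)) / (2 * Real.sqrt (q ^ 2 - 1)) * v ^ 2|
        ≤ C * v ^ 3 / q ^ 2 := by
  set κ := η / (1 + η)
  have hκ0 : 0 < κ := by positivity
  have hκ1 : κ ≤ 1 := by rw [div_le_one (by positivity)]; linarith
  refine ⟨4 / κ ^ 3, by positivity, κ ^ 3 / 2, by positivity, fun q hq v hv0 hv => ?_⟩
  set r := √(q ^ 2 - 1)
  have hq1 : 1 ≤ q := by linarith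
  have hκr : κ * q ≤ r := mul_le_sqrt_sq_sub_one hη hq
  have hr0 : 0 < r := lt_of_lt_of_le (by positivity) hκr
  have hr : r ^ 2 = q ^ 2 - 1 := sq_sqrt (by nlinarith)
  have hrq : r ≤ q := by nlinarith
  have hκr3 : κ ^ 3 * q ^ 3 ≤ r ^ 3 := by rw [← mul_pow]; gcongr
  have hκ3 : κ ^ 3 ≤ 1 := pow_le_one₀ hκ0.le hκ1
  have hsmall : (q + r) * v ≤ r ^ 3 := by
    nlinarith [mul_le_mul (by linarith : q + r ≤ 2 * q) hv (by positivity) (by positivity),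
      le_self_pow₀ hq1 (by norm_num : 3 ≠ 0)]
  refine (abs_hFun_s1Fun_sub_le hr hr0 (by linarith) hv0.le (by nlinarith) hsmall).trans ?_
  calc 2 * (q + r) * v ^ 3 / r ^ 3 ≤ 2 * (2 * q) * v ^ 3 / (κ ^ 3 * q ^ 3) := by
        gcongr; linarith
    _ = 4 / κ ^ 3 * v ^ 3 / q ^ 2 := by field_simp; ring
end

section
/- Define for q > 1 the functions h_q(s) = log((s+q)/(1−s²)) (on the domain where the argument is positive) and s₂(q,v) = v − q − √(v²+q²−1). Then for v → 0, h_q(−q − √(q²−1)) − h_q(s₂(q,v)) = ((q − √(q²−1))/(2√(q²−1)))·v² + O(v³/q²), uniformly for q ≥ 1 + η with any fixed η > 0. -/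
/-!
With `w = √(q²-1)` and `r = √(v²+q²-1)`, both points have the form `v - q - r` with
`r² = v² + q² - 1` (`v = 0` for the first), and there `(s+q)/(1-s²) = 1/(2(q+r))`. So the
difference of the two values of `h_q` is `log (1 + x)` with `x = (r - w)/(q + w)`, while the main
term is `v²/(2w(q+w)) ≥ x`. The Taylor bound `0 ≤ v²/(2w) - (r - w) ≤ v⁴/(8w³)` together with
`|log (1+x) - x| ≤ x²` bounds the error by `v⁴/(8(q²-1)²)` for every `q > 1`; for `q ≥ 1 + η`,
`q² - 1 ≥ κ q²` with `κ = (2η+η²)/(1+η)²`, whence `O(v³/q²)` for `v ≤ 1`.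
-/

open Real

/-- `s₂(q,v) = v − q − √(v²+q²−1)`. -/
noncomputable def s2Fun (q v : ℝ) : ℝ := v - q - Real.sqrt (v ^ 2 + q ^ 2 - 1)

lemma abs_log_one_add_sub_self_le_sq {x : ℝ} (hx : 0 ≤ x) : |log (1 + x) - x| ≤ x ^ 2 := by
  have h1x : 0 < 1 + x := by linarith
  have hup : log (1 + x) ≤ x := by linarith [log_le_sub_one_of_pos h1x]
  have hlo : 1 - (1 + x)⁻¹ ≤ log (1 + x) := one_sub_inv_le_log_of_pos h1x
  have hinv : x - x ^ 2 ≤ 1 - (1 + x)⁻¹ := by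
    rw [show 1 - (1 + x)⁻¹ = x / (1 + x) by field_simp; ring, le_div_iff₀ h1x]
    nlinarith [pow_nonneg hx 3]
  rw [abs_sub_comm, abs_of_nonneg (by linarith)]
  linarith

lemma sqrt_sq_add_sq_sub_self_bounds {w : ℝ} (hw : 0 < w) (v : ℝ) :
    0 ≤ v ^ 2 / (2 * w) - (√(w ^ 2 + v ^ 2) - w) ∧
      v ^ 2 / (2 * w) - (√(w ^ 2 + v ^ 2) - w) ≤ v ^ 4 / (8 * w ^ 3) := by
  set r := √(w ^ 2 + v ^ 2)
  have hr2 : r ^ 2 = w ^ 2 + v ^ 2 := sq_sqrt (by positivity)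
  have hwr : w ≤ r := (le_sqrt hw.le (by positivity)).2 (by nlinarith)
  have hexact : v ^ 2 / (2 * w) - (r - w) = v ^ 4 / (2 * w * (r + w) ^ 2) := by
    have hrw : 0 < r + w := by linarith
    field_simp
    linear_combination (r ^ 2 - w ^ 2 + v ^ 2 - (r + w) ^ 2) * hr2
  rw [hexact]
  refine ⟨by positivity, div_le_div_of_nonneg_left (by positivity) (by positivity) ?_⟩
  nlinarith

lemma hFun_sub_sub_eq_neg_log {q r v : ℝ} (hr : r ^ 2 = v ^ 2 + q ^ 2 - 1) (hrv : r ≠ v) :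
    hFun q (v - q - r) = -log (2 * (q + r)) := by
  have hden : 1 - (v - q - r) ^ 2 = -(2 * (q + r) * (r - v)) := by linear_combination hr
  have hrv' : r - v ≠ 0 := sub_ne_zero.2 hrv
  rw [hFun, hden, ← log_inv]
  congr 1
  rcases eq_or_ne (q + r) 0 with hqr | hqr
  · simp [hqr]
  · field_simp
    ring

lemma abs_log_one_add_sqrt_sub_le {q w : ℝ} (hw : 0 < w) (hwq : w ≤ q) (v : ℝ) :
    |log (1 + (√(w ^ 2 + v ^ 2) - w) / (q + w)) - v ^ 2 / (2 * w) / (q + w)|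
      ≤ v ^ 4 / (8 * w ^ 4) := by
  obtain ⟨hgap_nonneg, hgap_le⟩ := sqrt_sq_add_sq_sub_self_bounds hw v
  set x := (√(w ^ 2 + v ^ 2) - w) / (q + w) with hx
  have hqw : 2 * w ≤ q + w := by linarith
  have hx_le : x ≤ v ^ 2 / (2 * w) / (q + w) :=
    div_le_div_of_nonneg_right (by linarith) (by linarith)
  have hx0 : 0 ≤ x :=
    div_nonneg (sub_nonneg.2 (le_sqrt_of_sq_le (by nlinarith))) (by linarith)
  have hx_sq : x ^ 2 ≤ v ^ 4 / (16 * w ^ 4) := by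
    calc x ^ 2 ≤ (v ^ 2 / (2 * w) / (2 * w)) ^ 2 := by
          gcongr
          exact hx_le.trans (div_le_div_of_nonneg_left (by positivity) (by positivity) hqw)
      _ = v ^ 4 / (16 * w ^ 4) := by field_simp; ring
  have hgap : v ^ 2 / (2 * w) / (q + w) - x ≤ v ^ 4 / (16 * w ^ 4) := by
    calc v ^ 2 / (2 * w) / (q + w) - x
        = (v ^ 2 / (2 * w) - (√(w ^ 2 + v ^ 2) - w)) / (q + w) := by
          rw [hx, sub_div _ (√(w ^ 2 + v ^ 2) - w)]
      _ ≤ v ^ 4 / (8 * w ^ 3) / (2 * w) := div_le_div₀ (by positivity) hgap_le (by positivity) hqw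
      _ = v ^ 4 / (16 * w ^ 4) := by field_simp; ring
  calc |log (1 + x) - v ^ 2 / (2 * w) / (q + w)|
      ≤ |log (1 + x) - x| + |x - v ^ 2 / (2 * w) / (q + w)| := abs_sub_le _ _ _
    _ ≤ x ^ 2 + (v ^ 2 / (2 * w) / (q + w) - x) := by
        rw [abs_sub_comm x, abs_of_nonneg (sub_nonneg.2 hx_le)]
        gcongr
        exact abs_log_one_add_sub_self_le_sq hx0
    _ ≤ v ^ 4 / (16 * w ^ 4) + v ^ 4 / (16 * w ^ 4) := add_le_add hx_sq hgap
    _ = v ^ 4 / (8 * w ^ 4) := by ring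

theorem abs_hFun_sub_hFun_s2Fun_sub_le {q : ℝ} (hq : 1 < q) (v : ℝ) :
    |hFun q (-q - √(q ^ 2 - 1)) - hFun q (s2Fun q v) -
        (q - √(q ^ 2 - 1)) / (2 * √(q ^ 2 - 1)) * v ^ 2| ≤ v ^ 4 / (8 * (q ^ 2 - 1) ^ 2) := by
  set w := √(q ^ 2 - 1)
  have hw2 : w ^ 2 = q ^ 2 - 1 := sq_sqrt (by nlinarith)
  have hw : 0 < w := sqrt_pos.2 (by nlinarith)
  have hwq : w ≤ q := by nlinarith
  set r := √(v ^ 2 + q ^ 2 - 1)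
  have hr_eq : r = √(w ^ 2 + v ^ 2) := by rw [hw2, add_comm, ← add_sub_assoc]
  have hr2 : r ^ 2 = v ^ 2 + q ^ 2 - 1 := sq_sqrt (by nlinarith)
  have hvr : v < r :=
    (le_abs_self v).trans_lt <| by
      rw [← sqrt_sq_eq_abs]
      exact sqrt_lt_sqrt (sq_nonneg v) (by nlinarith)
  have hdiff : hFun q (-q - w) - hFun q (s2Fun q v) = log (1 + (r - w) / (q + w)) := by
    rw [show -q - w = 0 - q - w by ring, s2Fun,
      hFun_sub_sub_eq_neg_log (by linear_combination hw2) hw.ne',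
      hFun_sub_sub_eq_neg_log hr2 hvr.ne', neg_sub_neg, ← log_div (by positivity) (by positivity)]
    congr 1
    field_simp
    ring
  have hcoef : (q - w) / (2 * w) * v ^ 2 = v ^ 2 / (2 * w) / (q + w) := by
    field_simp
    linear_combination (-v ^ 2) * hw2
  rw [hdiff, hcoef, ← hw2, ← pow_mul, hr_eq]
  exact abs_log_one_add_sqrt_sub_le hw hwq v

/-- for `q ≥ 1 + η` and `v → 0`,
`h_q(−q−√(q²−1)) − h_q(s₂(q,v)) = ((q−√(q²−1))/(2√(q²−1)))·v² + O(v³/q²)`,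
uniformly in `q`. -/
theorem stmt_9 (η : ℝ) (hη : 0 < η) :
    ∃ C > 0, ∃ v₀ > 0, ∀ q : ℝ, 1 + η ≤ q → ∀ v : ℝ, 0 < v → v ≤ v₀ →
      |hFun q (-q - Real.sqrt (q ^ 2 - 1)) - hFun q (s2Fun q v) -
        (q - Real.sqrt (q ^ 2 - 1)) / (2 * Real.sqrt (q ^ 2 - 1)) * v ^ 2|
        ≤ C * v ^ 3 / q ^ 2 := by
  set κ := (2 * η + η ^ 2) / (1 + η) ^ 2
  have hκ : 0 < κ := by positivity
  refine ⟨1 / (8 * κ ^ 2), by positivity, 1, one_pos, fun q hq v hv hv1 => ?_⟩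
  have hq1 : 1 < q := by linarith
  have hq2 : 1 ≤ q ^ 2 := by nlinarith
  have hκq : κ * q ^ 2 ≤ q ^ 2 - 1 := by
    rw [div_mul_eq_mul_div, div_le_iff₀ (by positivity)]
    nlinarith
  calc _ ≤ v ^ 4 / (8 * (q ^ 2 - 1) ^ 2) := abs_hFun_sub_hFun_s2Fun_sub_le hq1 v
    _ ≤ v ^ 4 / (8 * (κ * q ^ 2) ^ 2) := by gcongr
    _ = 1 / (8 * κ ^ 2) * v ^ 3 / q ^ 2 * (v / q ^ 2) := by field_simp
    _ ≤ 1 / (8 * κ ^ 2) * v ^ 3 / q ^ 2 * 1 := by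
        gcongr
        exact div_le_one_of_le₀ (hv1.trans hq2) (by positivity)
    _ = 1 / (8 * κ ^ 2) * v ^ 3 / q ^ 2 := mul_one _
end

section
/- Let D > 0 be square-free, fix ideal class representatives with bases giving integer matrices B_{l1}, B_{l2} via β̄_{li}·β_{lj} = b_{lij1}√D + b_{lij2}, and set B_l = [[b_{l111}, b_{l211}],[b_{l121}, b_{l221}]]. Then B_l ∈ GL(2, ℤ), i.e. det B_l = ±1. -/
/-!
If `det B` is not `±1`, some prime `p` divides it, so over `𝔽_p` the matrix `B` has a nonzero kernel
vector `v`. For `ξ = ∑ vᵢ β̄ᵢ`, every `ξ βⱼ` then has `√D`-coefficient divisible by `p`. Since `I` is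
stable under `√D` and `√D` is irrational, multiplying by `√D` swaps the two coefficients, so in fact
`ξ I ⊆ p ℤ[√D]`. Hence `ξ / p` maps `I` into `ℤ[√D]`, i.e. lies in `I⁻¹`, and linear independence
of the `β̄ᵢ` forces `p ∣ vᵢ` for all `i`, a contradiction.
-/

open Matrix

/-- The order `ℤ[√D]` viewed as a ℤ-submodule of ℝ (spanned by `1` and `√D`). -/
noncomputable def orderZsqrtd (D : ℤ) : Submodule ℤ ℝ :=
  Submodule.span ℤ ({1, Real.sqrt D} : Set ℝ)

open Submodule Set

lemma irrational_sqrt_of_squarefree {D : ℤ} (hD : 0 ≤ D) (hsf : Squarefree D) (h1 : D ≠ 1) :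
    Irrational √D := by
  refine irrational_sqrt_intCast_iff.mpr ⟨fun ⟨r, hr⟩ => ?_, hD⟩
  rcases Int.isUnit_iff.mp (hsf r (hr ▸ dvd_rfl)) with rfl | rfl <;> simp_all

lemma Irrational.intCast_add_intCast_mul_inj {r : ℝ} (hr : Irrational r) {a b c d : ℤ}
    (h : (a : ℝ) + b * r = c + d * r) : a = c ∧ b = d := by
  have hbd : b = d := by
    by_contra hne
    refine (hr.intCast_mul (sub_ne_zero.mpr hne)).ne_int (c - a) ?_
    push_cast
    linarith
  subst hbd
  exact ⟨by exact_mod_cast add_right_cancel h, rfl⟩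

lemma div_mem_span_pair_of_mem_of_mul_mem {r : ℝ} {D : ℤ} (hr : Irrational r)
    (hrr : r * r = D) (p : ℤ) {w : ℝ} (hw : w ∈ span ℤ {1, p * r})
    (hrw : r * w ∈ span ℤ {1, p * r}) : w / p ∈ span ℤ {1, r} := by
  obtain ⟨a, b, rfl⟩ := mem_span_pair.mp hw
  obtain ⟨c, d, hcd⟩ := mem_span_pair.mp hrw
  have hrw' : (c : ℝ) + (d * p : ℤ) * r = (b * p * D : ℤ) + a * r := by
    simp only [zsmul_eq_mul] at hcd
    push_cast
    linear_combination hcd + b * p * hrr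
  obtain ⟨-, rfl⟩ := hr.intCast_add_intCast_mul_inj hrw'
  rcases eq_or_ne p 0 with rfl | hp
  · simp
  refine mem_span_pair.mpr ⟨d, b, ?_⟩
  simp only [zsmul_eq_mul]
  push_cast
  field_simp

lemma div_mul_mem_span_pair_of_mul_mem {r : ℝ} {D : ℤ} (hr : Irrational r) (hrr : r * r = D)
    (p : ℤ) {I : Submodule ℤ ℝ} (hI : span ℤ {1, r} * I ≤ I) {ξ : ℝ}
    (hξ : ∀ z ∈ I, ξ * z ∈ span ℤ {1, p * r}) : ∀ z ∈ I, ξ / p * z ∈ span ℤ {1, r} := by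
  intro z hz
  have hrz : r * z ∈ I := hI (mul_mem_mul (subset_span (by simp)) hz)
  rw [div_mul_eq_mul_div]
  refine div_mem_span_pair_of_mem_of_mul_mem hr hrr p (hξ z hz) ?_
  rw [mul_left_comm]
  exact hξ _ hrz

lemma Submodule.mem_of_mul_mem_of_mul_eq {R A : Type*} [CommSemiring R] [CommSemiring A]
    [Algebra R A] {O I J : Submodule R A} (hJ : O * J ≤ J) (hJI : J * I = O) (h1 : 1 ∈ O)
    {ζ : A} (hζ : ∀ z ∈ I, ζ * z ∈ O) : ζ ∈ J := by
  have hle : J * I ≤ J.comap (LinearMap.mulLeft R ζ) := by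
    refine mul_le.mpr fun a ha z hz => ?_
    rw [mem_comap, LinearMap.mulLeft_apply, mul_left_comm, mul_comm]
    exact hJ (mul_mem_mul (hζ z hz) ha)
  have := hle (hJI ▸ h1)
  rwa [mem_comap, LinearMap.mulLeft_apply, mul_one] at this

lemma Matrix.exists_mulVec_dvd_of_dvd_det {n : Type*} [Fintype n] [DecidableEq n]
    (M : Matrix n n ℤ) {p : ℕ} (hp : p.Prime) (h : (p : ℤ) ∣ M.det) :
    ∃ v : n → ℤ, (∀ j, (p : ℤ) ∣ (M *ᵥ v) j) ∧ ¬ ∀ i, (p : ℤ) ∣ v i := by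
  have := Fact.mk hp
  have hdet : (M.map (Int.castRingHom (ZMod p))).det = 0 := by
    rw [← RingHom.mapMatrix_apply, ← RingHom.map_det]
    exact (ZMod.intCast_zmod_eq_zero_iff_dvd _ _).mpr h
  obtain ⟨v, hv0, hv⟩ := exists_mulVec_eq_zero_iff.mpr hdet
  have hcast : (Int.castRingHom (ZMod p)) ∘ (fun i => ((v i).val : ℤ)) = v := by
    ext i; simp
  refine ⟨fun i => (v i).val, fun j => ?_, fun hdvd => hv0 ?_⟩
  · rw [← ZMod.intCast_zmod_eq_zero_iff_dvd]
    change Int.castRingHom (ZMod p) _ = 0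
    rw [RingHom.map_mulVec, hcast, hv, Pi.zero_apply]
  · ext i
    simpa using (ZMod.intCast_zmod_eq_zero_iff_dvd _ _).mpr (hdvd i)

lemma LinearIndependent.dvd_of_div_mem_span {ι K : Type*} [Fintype ι] [Field K] [CharZero K]
    {β : ι → K} (hβ : LinearIndependent ℤ β) {p : ℤ} (hp : p ≠ 0) {v : ι → ℤ}
    (h : (∑ i, v i * β i) / p ∈ span ℤ (range β)) : ∀ i, p ∣ v i := by
  obtain ⟨e, he⟩ := (mem_span_range_iff_exists_fun ℤ).mp h
  have hsum : ∑ i, (p * e i) • β i = ∑ i, v i • β i := by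
    simp only [zsmul_eq_mul] at he ⊢
    push_cast
    simp only [mul_assoc, ← Finset.mul_sum, he]
    field_simp
  exact fun i => ⟨e i, (Fintype.linearIndependent_iffₛ.mp hβ _ _ hsum i).symm⟩

theorem stmt_13_general (D : ℤ) (hD : 0 < D) (hsf : Squarefree D) (hmod : D % 4 ≠ 1)
    (β β' : Fin 2 → ℝ)
    (b : Fin 2 → Fin 2 → Fin 2 → ℤ)
    -- `I = span β` and `I⁻¹ = span β'` are modules over `ℤ[√D]`
    (hI : orderZsqrtd D * Submodule.span ℤ (Set.range β) ≤ Submodule.span ℤ (Set.range β))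
    (hI' : orderZsqrtd D * Submodule.span ℤ (Set.range β') ≤ Submodule.span ℤ (Set.range β'))
    -- `I⁻¹ · I = ℤ[√D]`
    (hII : Submodule.span ℤ (Set.range β') * Submodule.span ℤ (Set.range β) = orderZsqrtd D)
    -- the bases are ℤ-linearly independent
    (hβ' : LinearIndependent ℤ β')
    -- definition of the integers `b i j k`
    (hb : ∀ i j : Fin 2, β' i * β j = (b i j 0 : ℝ) * Real.sqrt D + (b i j 1 : ℝ)) :
    (!![b 0 0 0, b 1 0 0; b 0 1 0, b 1 1 0] : Matrix (Fin 2) (Fin 2) ℤ).det = 1 ∨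
    (!![b 0 0 0, b 1 0 0; b 0 1 0, b 1 1 0] : Matrix (Fin 2) (Fin 2) ℤ).det = -1 := by
  set B : Matrix (Fin 2) (Fin 2) ℤ := !![b 0 0 0, b 1 0 0; b 0 1 0, b 1 1 0]
  rw [← Int.isUnit_iff, Int.isUnit_iff_natAbs_eq]
  by_contra hB
  obtain ⟨p, hp, hpB⟩ := Nat.exists_prime_and_dvd hB
  obtain ⟨v, hBv, hv⟩ := B.exists_mulVec_dvd_of_dvd_det hp (Int.natCast_dvd.mpr hpB)
  have hirr : Irrational √D :=
    irrational_sqrt_of_squarefree hD.le hsf (by rintro rfl; exact hmod rfl)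
  have hrr : √D * √D = D := Real.mul_self_sqrt (by exact_mod_cast hD.le)
  set ξ := ∑ i, v i * β' i
  -- the `√D`-coefficient of `ξ * β j` is `(B *ᵥ v) j`
  have hξβ : ∀ j, ξ * β j ∈ span ℤ {1, ((p : ℤ) : ℝ) * √D} := by
    intro j
    obtain ⟨k, hk⟩ := hBv j
    refine mem_span_pair.mpr ⟨∑ i, v i * b i j 1, k, ?_⟩
    have hBvj : (B *ᵥ v) j = b 0 j 0 * v 0 + b 1 j 0 * v 1 := by
      fin_cases j <;> simp [B, mulVec, dotProduct, Fin.sum_univ_two]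
    have hk' : ((p : ℤ) * k : ℝ) = b 0 j 0 * v 0 + b 1 j 0 * v 1 := by
      exact_mod_cast hk.symm.trans hBvj
    simp only [ξ, zsmul_eq_mul, Fin.sum_univ_two, Int.cast_add, Int.cast_mul]
    linear_combination √D * hk' - (v 0 : ℝ) * hb 0 j - (v 1 : ℝ) * hb 1 j
  have hξI : ∀ z ∈ span ℤ (range β), ξ * z ∈ span ℤ {1, ((p : ℤ) : ℝ) * √D} := fun z hz =>
    (span_le (p := (span ℤ _).comap (LinearMap.mulLeft ℤ ξ))).mpr (range_subset_iff.mpr hξβ) hz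
  have hξp : ξ / (p : ℤ) ∈ span ℤ (range β') :=
    mem_of_mul_mem_of_mul_eq hI' hII (subset_span (by simp))
      (div_mul_mem_span_pair_of_mul_mem hirr hrr p hI hξI)
  exact hv (hβ'.dvd_of_div_mem_span (by exact_mod_cast hp.ne_zero) hξp)

/-- let `D > 0` be squarefree with `D ≢ 1 (mod 4)`, let `{β₁, β₂}` be a
ℤ-basis of a fractional ideal `I` of `ℤ[√D]` and `{β̄₁, β̄₂}` a ℤ-basis of `I⁻¹`
(so that `I⁻¹·I = ℤ[√D]` and both are modules over `ℤ[√D]`), and let the integers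
`b i j k` be defined by `β̄ᵢ·βⱼ = (b i j 0)·√D + (b i j 1)`.  Then the matrix
`B = [[b₁₁₁, b₂₁₁],[b₁₂₁, b₂₂₁]]` of `√D`-coefficients lies in `GL(2,ℤ)`,
i.e. `det B = ±1`. -/
theorem stmt_13 (D : ℤ) (hD : 0 < D) (hsf : Squarefree D) (hmod : D % 4 ≠ 1)
    (β β' : Fin 2 → ℝ)
    (b : Fin 2 → Fin 2 → Fin 2 → ℤ)
    -- `I = span β` and `I⁻¹ = span β'` are modules over `ℤ[√D]`
    (hI : orderZsqrtd D * Submodule.span ℤ (Set.range β) ≤ Submodule.span ℤ (Set.range β))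
    (hI' : orderZsqrtd D * Submodule.span ℤ (Set.range β') ≤ Submodule.span ℤ (Set.range β'))
    -- `I⁻¹ · I = ℤ[√D]`
    (hII : Submodule.span ℤ (Set.range β') * Submodule.span ℤ (Set.range β) = orderZsqrtd D)
    -- the bases are ℤ-linearly independent
    (hβ : LinearIndependent ℤ β) (hβ' : LinearIndependent ℤ β')
    -- definition of the integers `b i j k`
    (hb : ∀ i j : Fin 2, β' i * β j = (b i j 0 : ℝ) * Real.sqrt D + (b i j 1 : ℝ)) :
    (!![b 0 0 0, b 1 0 0; b 0 1 0, b 1 1 0] : Matrix (Fin 2) (Fin 2) ℤ).det = 1 ∨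
    (!![b 0 0 0, b 1 0 0; b 0 1 0, b 1 1 0] : Matrix (Fin 2) (Fin 2) ℤ).det = -1 :=
  stmt_13_general D hD hsf hmod β β' b hI hI' hII hβ' hb
end

section
/- Let D be square-free with D ≢ 1 (mod 4), n ≥ 1, and ν a fixed residue mod n with ν² ≡ D (mod n). Suppose m₁, m₂ are positive integers with m₁ ≡ m₂ ≡ 0 (mod n), and μ₁, μ₂ are integers with μᵢ² ≡ D (mod mᵢ) and μ₁ ≡ μ₂ ≡ ν (mod n). If there exist γ ∈ SL(2,ℤ) and a totally positive ξ ∈ ℚ(√D) such that [[1, μ₁],[0, m₁]]·M·diag(ξ⁽¹⁾, ξ⁽²⁾) = γ·[[1, μ₂],[0, m₂]]·M, where M = [[√D, −√D],[1, 1]], then γ ∈ Γ₀(n). -/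
/-!
Write `γ = [[p, q], [r, t]]` and `ξ = a + b√D`. Comparing entries of the matrix identity gives
`r = m₁ b`, and taking determinants gives `m₁ N(ξ) = m₂`; hence `X := m₁ p - μ₁ r = μ₂ r + m₂ t`
(which equals `m₁ a`) satisfies `X² - D r² = m₁ m₂`. Modulo `n` this reads `X ≡ -ν r`, `X ≡ ν r` and
`n² ∣ X² - D r²`, so `n ∣ 2 ν r`. A prime `P ∤ 2ν` therefore contributes its full power in `n`
to `r`. A prime `P ∣ 2ν` divides `n` only once, since `P² ∣ D - ν²` would force `P² ∣ D`, or
`D ≡ 1 (mod 4)` when `P = 2`; and `P ∣ r` follows from `P² ∣ X² - D r²`, by squarefreeness of `D`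
if `P ∣ ν`, and by a computation mod 4 if `P = 2`.
-/

open Matrix MatrixGroups

noncomputable def Mmat (D : ℤ) : Matrix (Fin 2) (Fin 2) ℝ :=
  !![Real.sqrt D, -Real.sqrt D; 1, 1]

def toRealMat (γ : SL(2, ℤ)) : Matrix (Fin 2) (Fin 2) ℝ :=
  γ.1.map ((↑) : ℤ → ℝ)

theorem Squarefree.dvd_of_sq_dvd_mul_sq {D P r : ℤ} (hD : Squarefree D) (hP : Prime P)
    (h : P ^ 2 ∣ D * r ^ 2) : P ∣ r := by
  by_contra hr
  have hcop : IsCoprime (P ^ 2) (r ^ 2) := ((hP.coprime_iff_not_dvd).2 hr).pow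
  exact hP.not_isUnit (hD P (sq P ▸ hcop.dvd_of_dvd_mul_right h))

theorem Int.not_four_dvd_sq_sub_mul_sq_of_odd {D X r : ℤ} (hD : D % 4 ≠ 1) (hX : Odd X)
    (hr : Odd r) : ¬ 4 ∣ X ^ 2 - D * r ^ 2 := by
  have hX2 := Int.sq_mod_four_eq_one_of_odd hX
  have hr2 := Int.sq_mod_four_eq_one_of_odd hr
  have hDr : 4 ∣ D * (r ^ 2 - 1) := (show (4 : ℤ) ∣ r ^ 2 - 1 by omega).mul_left D
  have e : X ^ 2 - D * r ^ 2 = X ^ 2 - D * (r ^ 2 - 1) - D := by ring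
  omega

theorem Int.eq_two_of_prime_dvd_two_mul {P : ℕ} {ν : ℤ} (hP : P.Prime) (h : (P : ℤ) ∣ 2 * ν)
    (hPν : ¬ (P : ℤ) ∣ ν) : P = 2 :=
  (Nat.prime_dvd_prime_iff_eq hP Nat.prime_two).1 <| by
    exact_mod_cast ((Nat.prime_iff_prime_int.1 hP).dvd_mul.1 h).resolve_right hPν

theorem Int.not_prime_dvd_two_mul_of_sq_dvd_sub_sq {D ν : ℤ} {P : ℕ} (hD : Squarefree D)
    (hD4 : D % 4 ≠ 1) (hP : P.Prime) (h : (P : ℤ) ^ 2 ∣ D - ν ^ 2) : ¬ (P : ℤ) ∣ 2 * ν := by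
  intro h2ν
  by_cases hPν : (P : ℤ) ∣ ν
  · have hPD : (P : ℤ) ^ 2 ∣ D := by
      simpa using dvd_add h (pow_dvd_pow_of_dvd hPν 2)
    exact (Nat.prime_iff_prime_int.1 hP).not_isUnit (hD _ (sq (P : ℤ) ▸ hPD))
  · obtain rfl := Int.eq_two_of_prime_dvd_two_mul hP h2ν hPν
    have hν : Odd ν := Int.not_even_iff_odd.1 (by simpa [even_iff_two_dvd] using hPν)
    have hν2 := Int.sq_mod_four_eq_one_of_odd hν
    push_cast at h
    omega

theorem Int.prime_dvd_of_sq_dvd_sq_sub_mul_sq {D ν X r : ℤ} {P : ℕ} (hD : Squarefree D)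
    (hD4 : D % 4 ≠ 1) (hP : P.Prime) (hP2ν : (P : ℤ) ∣ 2 * ν) (hX : (P : ℤ) ∣ X + ν * r)
    (hnorm : (P : ℤ) ^ 2 ∣ X ^ 2 - D * r ^ 2) : (P : ℤ) ∣ r := by
  by_cases hPν : (P : ℤ) ∣ ν
  · have hPX : (P : ℤ) ∣ X := by simpa using dvd_sub hX (hPν.mul_right r)
    refine hD.dvd_of_sq_dvd_mul_sq (Nat.prime_iff_prime_int.1 hP) ?_
    simpa using dvd_sub (pow_dvd_pow_of_dvd hPX 2) hnorm
  · obtain rfl := Int.eq_two_of_prime_dvd_two_mul hP hP2ν hPν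
    push_cast at hPν hX hnorm ⊢
    by_contra hr
    have hνodd : Odd ν := Int.not_even_iff_odd.1 (by simpa [even_iff_two_dvd] using hPν)
    have hrodd : Odd r := Int.not_even_iff_odd.1 (by simpa [even_iff_two_dvd] using hr)
    have hXodd : Odd X := by simpa using (even_iff_two_dvd.2 hX).sub_odd (hνodd.mul hrodd)
    exact Int.not_four_dvd_sq_sub_mul_sq_of_odd hD4 hXodd hrodd (by simpa using hnorm)

theorem Int.dvd_of_sq_sub_mul_sq_dvd {D n ν X r : ℤ} (hD : Squarefree D) (hD4 : D % 4 ≠ 1)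
    (hν : n ∣ D - ν ^ 2) (hX₁ : n ∣ X + ν * r) (hX₂ : n ∣ X - ν * r)
    (hnorm : n ^ 2 ∣ X ^ 2 - D * r ^ 2) : n ∣ r := by
  have h2νr : n ∣ 2 * ν * r := by
    rw [show 2 * ν * r = X + ν * r - (X - ν * r) by ring]
    exact dvd_sub hX₁ hX₂
  rw [← Int.natAbs_dvd_natAbs, Nat.dvd_iff_prime_pow_dvd_dvd]
  intro P k hP hPk
  replace hPk : (P : ℤ) ^ k ∣ n := by exact_mod_cast Int.natCast_dvd.2 hPk
  rw [← Int.natCast_dvd, Nat.cast_pow]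
  by_cases hP2ν : (P : ℤ) ∣ 2 * ν
  · have hk : k ≤ 1 := by
      by_contra! hk
      exact Int.not_prime_dvd_two_mul_of_sq_dvd_sub_sq hD hD4 hP
        ((pow_dvd_pow _ hk).trans (hPk.trans hν)) hP2ν
    obtain rfl | rfl : k = 0 ∨ k = 1 := by omega
    · simp
    rw [pow_one] at hPk ⊢
    exact Int.prime_dvd_of_sq_dvd_sq_sub_mul_sq hD hD4 hP hP2ν (hPk.trans hX₁)
      ((pow_dvd_pow_of_dvd hPk 2).trans hnorm)
  · have hcop : IsCoprime ((P : ℤ) ^ k) (2 * ν) :=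
      (((Nat.prime_iff_prime_int.1 hP).coprime_iff_not_dvd).2 hP2ν).pow_left
    exact hcop.dvd_of_dvd_mul_left (hPk.trans h2νr)

theorem det_Mmat (D : ℤ) : (Mmat D).det = 2 * Real.sqrt D := by
  rw [Mmat, det_fin_two_of]; ring

theorem det_toRealMat (γ : SL(2, ℤ)) : (toRealMat γ).det = 1 := by
  simpa [toRealMat, γ.det_coe] using ((Int.castRingHom ℝ).map_det γ.1).symm

theorem relations_of_mul_Mmat_diagonal_eq {D : ℤ} (hD : 0 < D) {μ₁ μ₂ m₁ m₂ : ℤ}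
    {γ : SL(2, ℤ)} {a b : ℝ}
    (heq : !![1, (μ₁ : ℝ); 0, (m₁ : ℝ)] * Mmat D *
        diagonal ![a + b * Real.sqrt D, a - b * Real.sqrt D] =
      toRealMat γ * !![1, (μ₂ : ℝ); 0, (m₂ : ℝ)] * Mmat D) :
    (γ 1 0 : ℝ) = m₁ * b ∧ (γ 0 0 : ℝ) = a + μ₁ * b ∧ (m₁ * a : ℝ) = μ₂ * γ 1 0 + m₂ * γ 1 1 ∧
      m₁ * (a ^ 2 - D * b ^ 2) = (m₂ : ℝ) := by
  have hs : Real.sqrt D ^ 2 = D := Real.sq_sqrt (by positivity)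
  have h2s : 2 * Real.sqrt D ≠ 0 := by positivity
  have hdet := congrArg det heq
  simp only [det_mul, det_Mmat, det_toRealMat, det_diagonal, det_fin_two_of, Fin.prod_univ_two,
    cons_val_zero, cons_val_one] at hdet
  rw [Mmat, diagonal_vec2, eta_fin_two (toRealMat γ)] at heq
  simp only [mul_fin_two, EmbeddingLike.apply_eq_iff_eq, vecCons_inj, and_true, toRealMat, map_apply] at heq
  obtain ⟨⟨h00, h01⟩, h10, h11⟩ := heq
  refine ⟨?_, ?_, ?_, ?_⟩
  · apply mul_left_cancel₀ h2s; linear_combination h11 - h10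
  · apply mul_left_cancel₀ h2s; linear_combination h01 - h00
  · linear_combination (h10 + h11) / 2
  · apply mul_left_cancel₀ h2s; linear_combination hdet + 2 * Real.sqrt D * m₁ * b ^ 2 * hs

theorem exists_sq_sub_mul_sq_eq_of_mul_Mmat_diagonal_eq {D : ℤ} (hD : 0 < D)
    {μ₁ μ₂ m₁ m₂ : ℤ} {γ : SL(2, ℤ)} {a b : ℝ}
    (heq : !![1, (μ₁ : ℝ); 0, (m₁ : ℝ)] * Mmat D *
        diagonal ![a + b * Real.sqrt D, a - b * Real.sqrt D] =
      toRealMat γ * !![1, (μ₂ : ℝ); 0, (m₂ : ℝ)] * Mmat D) :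
    ∃ X : ℤ, X + μ₁ * γ 1 0 = m₁ * γ 0 0 ∧ X - μ₂ * γ 1 0 = m₂ * γ 1 1 ∧
      X ^ 2 - D * γ 1 0 ^ 2 = m₁ * m₂ := by
  obtain ⟨hr, hp, hX, hnorm⟩ := relations_of_mul_Mmat_diagonal_eq hD heq
  refine ⟨m₁ * γ 0 0 - μ₁ * γ 1 0, by ring, ?_, ?_⟩ <;> rw [← Int.cast_inj (α := ℝ)] <;> push_cast
  · linear_combination m₁ * hp - μ₁ * hr + hX
  · rw [hp, hr]
    linear_combination (m₁ : ℝ) * hnorm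

theorem stmt_14_general (D : ℤ) (hDpos : 0 < D) (hsf : Squarefree D) (hmod : D % 4 ≠ 1)
    (n : ℤ) (ν : ℤ) (hν : ν ^ 2 ≡ D [ZMOD n])
    (m₁ m₂ μ₁ μ₂ : ℤ)
    (hn₁ : n ∣ m₁) (hn₂ : n ∣ m₂)
    (hν₁ : μ₁ ≡ ν [ZMOD n]) (hν₂ : μ₂ ≡ ν [ZMOD n])
    (γ : SL(2, ℤ))
    -- ξ = a + b√D ∈ ℚ(√D), totally positive, with real embeddings ξ⁽¹⁾, ξ⁽²⁾
    (a b : ℚ) (ξ₁ ξ₂ : ℝ)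
    (hξ₁ : ξ₁ = (a : ℝ) + (b : ℝ) * Real.sqrt D)
    (hξ₂ : ξ₂ = (a : ℝ) - (b : ℝ) * Real.sqrt D)
    (heq : (!![1, (μ₁ : ℝ); 0, (m₁ : ℝ)] : Matrix (Fin 2) (Fin 2) ℝ) * Mmat D *
        Matrix.diagonal ![ξ₁, ξ₂] =
      toRealMat γ * !![1, (μ₂ : ℝ); 0, (m₂ : ℝ)] * Mmat D) :
    n ∣ γ.1 1 0 := by
  subst hξ₁ hξ₂
  obtain ⟨X, hX₁, hX₂, hnorm⟩ := exists_sq_sub_mul_sq_eq_of_mul_Mmat_diagonal_eq hDpos heq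
  refine Int.dvd_of_sq_sub_mul_sq_dvd hsf hmod hν.dvd ?_ ?_ (hnorm ▸ sq n ▸ mul_dvd_mul hn₁ hn₂)
  · rw [show X + ν * γ 1 0 = m₁ * γ 0 0 + (ν - μ₁) * γ 1 0 by linear_combination hX₁]
    exact dvd_add (hn₁.mul_right _) (hν₁.dvd.mul_right _)
  · rw [show X - ν * γ 1 0 = m₂ * γ 1 1 + (μ₂ - ν) * γ 1 0 by linear_combination hX₂]
    exact dvd_add (hn₂.mul_right _) (hν₂.symm.dvd.mul_right _)

/-- with `D` squarefree, `D ≢ 1 (mod 4)`, `D > 0`, a fixed root `ν mod n`,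
roots `μ₁ mod m₁`, `μ₂ mod m₂` with `n ∣ mᵢ` and `μᵢ ≡ ν (mod n)`, if there are
`γ ∈ SL(2,ℤ)` and a totally positive `ξ ∈ ℚ(√D)` with
`[[1,μ₁],[0,m₁]]·M·diag(ξ⁽¹⁾,ξ⁽²⁾) = γ·[[1,μ₂],[0,m₂]]·M`, then `γ ∈ Γ₀(n)`. -/
theorem stmt_14 (D : ℤ) (hDpos : 0 < D) (hsf : Squarefree D) (hmod : D % 4 ≠ 1)
    (n : ℤ) (hn : 0 < n) (ν : ℤ) (hν : ν ^ 2 ≡ D [ZMOD n])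
    (m₁ m₂ μ₁ μ₂ : ℤ) (hm₁ : 0 < m₁) (hm₂ : 0 < m₂)
    (hμ₁ : μ₁ ^ 2 ≡ D [ZMOD m₁]) (hμ₂ : μ₂ ^ 2 ≡ D [ZMOD m₂])
    (hn₁ : n ∣ m₁) (hn₂ : n ∣ m₂)
    (hν₁ : μ₁ ≡ ν [ZMOD n]) (hν₂ : μ₂ ≡ ν [ZMOD n])
    (γ : SL(2, ℤ))
    -- ξ = a + b√D ∈ ℚ(√D), totally positive, with real embeddings ξ⁽¹⁾, ξ⁽²⁾
    (a b : ℚ) (ξ₁ ξ₂ : ℝ)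
    (hξ₁ : ξ₁ = (a : ℝ) + (b : ℝ) * Real.sqrt D)
    (hξ₂ : ξ₂ = (a : ℝ) - (b : ℝ) * Real.sqrt D)
    (hpos₁ : 0 < ξ₁) (hpos₂ : 0 < ξ₂)
    (heq : (!![1, (μ₁ : ℝ); 0, (m₁ : ℝ)] : Matrix (Fin 2) (Fin 2) ℝ) * Mmat D *
        Matrix.diagonal ![ξ₁, ξ₂] =
      toRealMat γ * !![1, (μ₂ : ℝ); 0, (m₂ : ℝ)] * Mmat D) :
    n ∣ γ.1 1 0 :=
  stmt_14_general D hDpos hsf hmod n ν hν m₁ m₂ μ₁ μ₂ hn₁ hn₂ hν₁ hν₂ γ a b ξ₁ ξ₂ hξ₁ hξ₂ heq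
end

section
/- Let D > 0 be square-free with D ≢ 1 (mod 4), n ≥ 1, and ε₀ > 1 the generator of the totally positive units of ℤ[√D]. Let γ_l ∈ SL(2,ℤ) and 𝔅_l be as in the congruence parametrization, so that γ_l·𝔅_l·diag(ξ⁽¹⁾, ξ⁽²⁾) = [[1, μ],[0, m]]·[[√D, −√D],[1,1]] for some totally positive ξ, with m ≡ 0 (mod n). Then γ_l·𝔅_l·diag(ε₀, ε₀⁻¹)·𝔅_l⁻¹·γ_l⁻¹ ∈ Γ₀(n); in fact it lies in Γ₀(m). -/
/-!
Write `D = μ² + m k` and `ε₀ = e₁ + e₂√D`. The columns `(μ ± √D, m)` of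
`[[1, μ], [0, m]]·[[√D, −√D], [1, 1]]` are the two embeddings of the ℤ-basis `(μ + √D, m)`
of the ideal `[m, μ + √D]`, so they are eigenvectors, with eigenvalues `ε₀` and `ε₀⁻¹`, of the
integral matrix of multiplication by `ε₀` in that basis. Its determinant is the norm `e₁² − De₂² = 1` and its lower-left entry is `me₂`. Since
`diag(ξ⁽¹⁾, ξ⁽²⁾)` commutes with `diag(ε₀, ε₀⁻¹)`, it drops out of the conjugation, which
identifies this matrix with `γ_l·𝔅_l·diag(ε₀, ε₀⁻¹)·𝔅_l⁻¹·γ_l⁻¹`.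
-/

open Matrix MatrixGroups

namespace Matrix

variable {n R : Type*} [Fintype n] [DecidableEq n] [CommRing R]

theorem eq_mul_mul_inv_of_mul_eq {G P E : Matrix n n R} (hP : IsUnit P.det)
    (h : G * P = P * E) : G = P * E * P⁻¹ := by
  rw [← h, mul_nonsing_inv_cancel_right _ _ hP]

theorem mul_diagonal_conj {A : Matrix n n R} {ξ : n → R} (hξ : IsUnit (diagonal ξ).det)
    (e : n → R) : A * diagonal ξ * diagonal e * (A * diagonal ξ)⁻¹ = A * diagonal e * A⁻¹ := by
  have hcomm : diagonal ξ * diagonal e = diagonal e * diagonal ξ := by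
    simp only [diagonal_mul_diagonal, mul_comm]
  rw [mul_inv_rev, mul_assoc A, hcomm, ← mul_assoc A, ← mul_assoc,
    mul_nonsing_inv_cancel_right _ _ hξ]

end Matrix

theorem sq_sub_mul_sq_eq_one_of_mul_conj_eq_one {x y d : ℤ} (hd : 0 ≤ d)
    (h : ((x : ℝ) + y * Real.sqrt d) * ((x : ℝ) - y * Real.sqrt d) = 1) :
    x ^ 2 - d * y ^ 2 = 1 := by
  have hsq : Real.sqrt d * Real.sqrt d = d := Real.mul_self_sqrt (by exact_mod_cast hd)
  exact_mod_cast (by linear_combination h + (y : ℝ) ^ 2 * hsq : (x : ℝ) ^ 2 - d * y ^ 2 = 1)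

/-- With `D = μ² + m k`, the matrix of multiplication by `e₁ + e₂√D` on the ℤ-basis
`(μ + √D, m)` of the ideal `[m, μ + √D]`. -/
def mulMatrix (e₁ e₂ μ m k : ℤ) : Matrix (Fin 2) (Fin 2) ℤ :=
  !![e₁ + μ * e₂, e₂ * k; m * e₂, e₁ - μ * e₂]

theorem det_mulMatrix (e₁ e₂ μ m k : ℤ) :
    (mulMatrix e₁ e₂ μ m k).det = e₁ ^ 2 - (μ ^ 2 + m * k) * e₂ ^ 2 := by
  rw [mulMatrix, det_fin_two_of]
  ring

theorem mulMatrix_mul_eq {D e₁ e₂ μ m k : ℤ} (hD : 0 ≤ D) (hk : D = μ ^ 2 + m * k) :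
    (mulMatrix e₁ e₂ μ m k).map ((↑) : ℤ → ℝ) * (!![1, (μ : ℝ); 0, (m : ℝ)] * Mmat D) =
      !![1, (μ : ℝ); 0, (m : ℝ)] * Mmat D *
        diagonal ![e₁ + e₂ * Real.sqrt D, e₁ - e₂ * Real.sqrt D] := by
  have hsq : Real.sqrt D ^ 2 = μ ^ 2 + m * k := by
    rw [Real.sq_sqrt (by exact_mod_cast hD)]
    exact_mod_cast hk
  ext i j
  fin_cases i <;> fin_cases j <;>
    simp [mulMatrix, Mmat, Matrix.mul_apply, Fin.sum_univ_two] <;>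
    first
    | ring1
    | linear_combination -(e₂ : ℝ) * hsq

theorem stmt_15_general (D : ℤ) (hDpos : 0 < D)
    (n : ℤ)
    (e₁ e₂ : ℤ) (ε₀ : ℝ)
    (hε : ε₀ = (e₁ : ℝ) + (e₂ : ℝ) * Real.sqrt D) (hε1 : 1 < ε₀)
    (hεinv : (e₁ : ℝ) - (e₂ : ℝ) * Real.sqrt D = ε₀⁻¹)
    (γl : SL(2, ℤ)) (𝔅 : Matrix (Fin 2) (Fin 2) ℝ) (h𝔅 : 0 < 𝔅.det)
    (ξ₁ ξ₂ : ℝ)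
    (hpos₁ : 0 < ξ₁) (hpos₂ : 0 < ξ₂)
    (m μ : ℤ) (hμ : μ ^ 2 ≡ D [ZMOD m]) (hnm : n ∣ m)
    (heq : toRealMat γl * 𝔅 * Matrix.diagonal ![ξ₁, ξ₂] =
      (!![1, (μ : ℝ); 0, (m : ℝ)] : Matrix (Fin 2) (Fin 2) ℝ) * Mmat D) :
    ∃ γ₀ : SL(2, ℤ),
      toRealMat γ₀ =
        toRealMat γl * 𝔅 * Matrix.diagonal ![ε₀, ε₀⁻¹] * 𝔅⁻¹ * (toRealMat γl)⁻¹ ∧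
      m ∣ γ₀.1 1 0 ∧ n ∣ γ₀.1 1 0 := by
  obtain ⟨k, hk⟩ := hμ.dvd
  have hD : D = μ ^ 2 + m * k := by linarith
  have hnorm : e₁ ^ 2 - D * e₂ ^ 2 = 1 :=
    sq_sub_mul_sq_eq_one_of_mul_conj_eq_one hDpos.le
      (by rw [← hε, hεinv, mul_inv_cancel₀ (zero_lt_one.trans hε1).ne'])
  let γ₀ : SL(2, ℤ) := ⟨mulMatrix e₁ e₂ μ m k, by rw [det_mulMatrix, ← hD, hnorm]⟩
  have hm : m ∣ γ₀.1 1 0 := ⟨e₂, rfl⟩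
  refine ⟨γ₀, ?_, hm, hnm.trans hm⟩
  set A := toRealMat γl * 𝔅
  have hΞ : IsUnit (diagonal ![ξ₁, ξ₂]).det := by
    simp [hpos₁.ne', hpos₂.ne']
  have hP : IsUnit (A * diagonal ![ξ₁, ξ₂]).det := by
    simp [A, det_toRealMat, h𝔅.ne', hpos₁.ne', hpos₂.ne']
  calc toRealMat γ₀
      = A * diagonal ![ξ₁, ξ₂] * diagonal ![ε₀, ε₀⁻¹] * (A * diagonal ![ξ₁, ξ₂])⁻¹ := by
        refine eq_mul_mul_inv_of_mul_eq hP ?_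
        rw [heq, ← hεinv, hε]
        exact mulMatrix_mul_eq hDpos.le hD
    _ = A * diagonal ![ε₀, ε₀⁻¹] * A⁻¹ := mul_diagonal_conj hΞ _
    _ = A * diagonal ![ε₀, ε₀⁻¹] * 𝔅⁻¹ * (toRealMat γl)⁻¹ := by
        rw [mul_assoc _ 𝔅⁻¹, ← Matrix.mul_inv_rev]

/-- let `D > 0` be squarefree, `D ≢ 1 (mod 4)`, and `ε₀ = e₁ + e₂√D > 1` a
totally positive unit of `ℤ[√D]` (so `e₁ − e₂√D = ε₀⁻¹`).  If
`γ_l·𝔅_l·diag(ξ⁽¹⁾,ξ⁽²⁾) = [[1,μ],[0,m]]·[[√D,−√D],[1,1]]` with `ξ` totally positive,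
`μ² ≡ D (mod m)` and `n ∣ m`, then `γ_l·𝔅_l·diag(ε₀,ε₀⁻¹)·𝔅_l⁻¹·γ_l⁻¹` is an element of
`Γ₀(n)`, in fact of `Γ₀(m)`: it is an integral matrix of determinant one whose lower-left
entry is divisible by `m` (hence by `n`). -/
theorem stmt_15 (D : ℤ) (hDpos : 0 < D) (hsf : Squarefree D) (hmod : D % 4 ≠ 1)
    (n : ℤ) (hn : 0 < n)
    (e₁ e₂ : ℤ) (ε₀ : ℝ)
    (hε : ε₀ = (e₁ : ℝ) + (e₂ : ℝ) * Real.sqrt D) (hε1 : 1 < ε₀)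
    (hεinv : (e₁ : ℝ) - (e₂ : ℝ) * Real.sqrt D = ε₀⁻¹)
    (γl : SL(2, ℤ)) (𝔅 : Matrix (Fin 2) (Fin 2) ℝ) (h𝔅 : 0 < 𝔅.det)
    (a b : ℚ) (ξ₁ ξ₂ : ℝ)
    (hξ₁ : ξ₁ = (a : ℝ) + (b : ℝ) * Real.sqrt D)
    (hξ₂ : ξ₂ = (a : ℝ) - (b : ℝ) * Real.sqrt D)
    (hpos₁ : 0 < ξ₁) (hpos₂ : 0 < ξ₂)
    (m μ : ℤ) (hm : 0 < m) (hμ : μ ^ 2 ≡ D [ZMOD m]) (hnm : n ∣ m)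
    (heq : toRealMat γl * 𝔅 * Matrix.diagonal ![ξ₁, ξ₂] =
      (!![1, (μ : ℝ); 0, (m : ℝ)] : Matrix (Fin 2) (Fin 2) ℝ) * Mmat D) :
    ∃ γ₀ : SL(2, ℤ),
      toRealMat γ₀ =
        toRealMat γl * 𝔅 * Matrix.diagonal ![ε₀, ε₀⁻¹] * 𝔅⁻¹ * (toRealMat γl)⁻¹ ∧
      m ∣ γ₀.1 1 0 ∧ n ∣ γ₀.1 1 0 :=
  stmt_15_general D hDpos n e₁ e₂ ε₀ hε hε1 hεinv γl 𝔅 h𝔅 ξ₁ ξ₂ hpos₁ hpos₂ m μ hμ hnm heq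
end

section
/- Let D < 0 be square-free with D ≢ 1 (mod 4). For n = 1, there exist points z₁, …, z_h ∈ ℍ (h = h(D) the class number of ℚ(√D)) such that for every positive integer m and residue μ mod m with μ² ≡ D (mod m), there exists a unique l and a unique double coset Γ_∞ γ Γ_{z_l} ∈ Γ_∞\SL(2,ℤ)/Γ_{z_l} with γ·z_l ≡ μ/m + i·√(−D)/m (mod Γ_∞); and conversely every such double coset arises from a unique (m, μ mod m). -/
open Matrix MatrixGroups UpperHalfPlane

/-- The subgroup `Γ_∞` of `SL(2,ℤ)`, generated by `[[1,1],[0,1]]` and `−1`. -/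
def GammaInf : Subgroup SL(2, ℤ) :=
  Subgroup.closure {⟨!![1, 1; 0, 1], by norm_num [Matrix.det_fin_two_of]⟩, -1}

/-- `γ · z₀ = μ/m + i·√(−D)/m` modulo integer translation. -/
noncomputable def RootPointAt (D m μ : ℤ) (z₀ : UpperHalfPlane) (γ : SL(2, ℤ)) : Prop :=
  ∃ k : ℤ, ((γ • z₀ : UpperHalfPlane) : ℂ) =
    (((μ : ℝ) / (m : ℝ) + (k : ℝ) : ℝ) : ℂ) +
      ((Real.sqrt (-D) / (m : ℝ) : ℝ) : ℂ) * Complex.I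

/-! The points `(μ + i√(-D))/m` with `m > 0` and `μ² ≡ D (mod m)` form an `SL(2,ℤ)`-stable
subset of `ℍ`: writing `μ² - D = m e`, they are the roots in `ℍ` of the forms `m X² - 2μ X + e`
of discriminant `4D`, and `γ` carries such a form to another one of the same shape. A point of
the set in the fundamental domain has `m ≤ -2D` and `|μ| ≤ -D`, so the set is a finite union of
orbits; the `z_l` are orbit representatives. A point determines its pair `(m, μ)`, and translation
by `k` replaces `μ` with `μ + k m`, which gives both directions of the correspondence. -/

open scoped Modular

noncomputable def cmPoint (D m μ : ℤ) : ℂ := ((μ : ℂ) + (√(-D) : ℂ) * Complex.I) / m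

section cmPoint

variable {D m μ : ℤ}

theorem cmPoint_eq (D m μ : ℤ) :
    cmPoint D m μ = ((μ / m : ℝ) : ℂ) + ((√(-D) / m : ℝ) : ℂ) * Complex.I := by
  rw [cmPoint]; push_cast; ring

theorem cmPoint_re (D m μ : ℤ) : (cmPoint D m μ).re = μ / m := by
  simp [cmPoint_eq]

theorem cmPoint_im (D m μ : ℤ) : (cmPoint D m μ).im = √(-D) / m := by
  simp [cmPoint_eq]

theorem cmPoint_im_pos (hD : D < 0) (hm : 0 < m) : 0 < (cmPoint D m μ).im := by
  have : (0 : ℝ) < -D := by exact_mod_cast neg_pos.2 hD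
  rw [cmPoint_im]; positivity

theorem cmPoint_add_mul (hm : m ≠ 0) (k : ℤ) : cmPoint D m (μ + k * m) = cmPoint D m μ + k := by
  have : (m : ℂ) ≠ 0 := by exact_mod_cast hm
  simp only [cmPoint]; field_simp; push_cast; ring

theorem cmPoint_inj {m' μ' : ℤ} (hD : D < 0) (hm : 0 < m) (hm' : 0 < m')
    (h : cmPoint D m μ = cmPoint D m' μ') : m = m' ∧ μ = μ' := by
  have hs : √(-D : ℝ) ≠ 0 := by
    have : (0 : ℝ) < -D := by exact_mod_cast neg_pos.2 hD
    positivity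
  have hmR : (0 : ℝ) < m := by exact_mod_cast hm
  have hm'R : (0 : ℝ) < m' := by exact_mod_cast hm'
  have him := congrArg Complex.im h
  rw [cmPoint_im, cmPoint_im, div_eq_div_iff hmR.ne' hm'R.ne'] at him
  obtain rfl : m = m' := by exact_mod_cast (mul_left_cancel₀ hs him).symm
  have hre := congrArg Complex.re h
  rw [cmPoint_re, cmPoint_re, div_left_inj' hmR.ne'] at hre
  exact ⟨rfl, by exact_mod_cast hre⟩

theorem rootPointAt_iff {z : ℍ} {γ : SL(2, ℤ)} :
    RootPointAt D m μ z γ ↔ ∃ k : ℤ, ((γ • z : ℍ) : ℂ) = cmPoint D m μ + k := by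
  simp only [RootPointAt, cmPoint_eq]
  push_cast
  ring_nf

end cmPoint

theorem sqrt_neg_mul_I_sq {D : ℤ} (hD : D ≤ 0) : ((√(-D) : ℂ) * Complex.I) ^ 2 = D := by
  have : (0 : ℝ) ≤ -D := by exact_mod_cast neg_nonneg.2 hD
  rw [mul_pow, Complex.I_sq, ← Complex.ofReal_pow, Real.sq_sqrt this]
  push_cast; ring

section FormTransform

variable {D a b c d m μ e : ℤ}

theorem formTransform_mul_eq (he : μ ^ 2 - D = m * e) :
    m * (c ^ 2 * e + 2 * c * d * μ + d ^ 2 * m) = (c * μ + d * m) ^ 2 - c ^ 2 * D := by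
  linear_combination (-c ^ 2) * he

theorem formTransform_pos (hD : D < 0) (hm : 0 < m) (hcd : c ≠ 0 ∨ d ≠ 0)
    (he : μ ^ 2 - D = m * e) : 0 < c ^ 2 * e + 2 * c * d * μ + d ^ 2 * m := by
  refine pos_of_mul_pos_right ?_ hm.le
  rw [formTransform_mul_eq he]
  rcases eq_or_ne c 0 with rfl | hc
  · have : d * m ≠ 0 := mul_ne_zero (hcd.resolve_left (not_not.2 rfl)) hm.ne'
    simpa using pow_two_pos_of_ne_zero this
  · nlinarith [sq_nonneg (c * μ + d * m), pow_two_pos_of_ne_zero hc]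

theorem formTransform_modEq (hdet : a * d - b * c = 1) (he : μ ^ 2 - D = m * e) :
    (a * c * e + (a * d + b * c) * μ + b * d * m) ^ 2 ≡ D
      [ZMOD c ^ 2 * e + 2 * c * d * μ + d ^ 2 * m] :=
  (Int.modEq_iff_dvd.2 ⟨a ^ 2 * e + 2 * a * b * μ + b ^ 2 * m, by
    linear_combination ((μ ^ 2 - m * e) * (1 + a * d - b * c)) * hdet + he⟩).symm

theorem mobius_cmPoint (hD : D ≤ 0) (hdet : a * d - b * c = 1) (hm : m ≠ 0)
    (he : μ ^ 2 - D = m * e) (hm' : c ^ 2 * e + 2 * c * d * μ + d ^ 2 * m ≠ 0) :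
    ((a : ℂ) * cmPoint D m μ + b) / (c * cmPoint D m μ + d) =
      cmPoint D (c ^ 2 * e + 2 * c * d * μ + d ^ 2 * m)
        (a * c * e + (a * d + b * c) * μ + b * d * m) := by
  have ht := sqrt_neg_mul_I_sq hD
  set t : ℂ := (√(-D) : ℂ) * Complex.I
  have hmC : (m : ℂ) ≠ 0 := by exact_mod_cast hm
  have heC : (μ : ℂ) ^ 2 - D = m * e := by exact_mod_cast he
  have hdetC : (a : ℂ) * d - b * c = 1 := by exact_mod_cast hdet
  -- multiplying by the conjugate denominator yields the norm `m * m'`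
  have hnorm : (c * (μ + t) + d * m) * (c * (μ - t) + d * m) =
      m * ((c ^ 2 * e + 2 * c * d * μ + d ^ 2 * m : ℤ) : ℂ) := by
    push_cast; linear_combination (c : ℂ) ^ 2 * heC - (c : ℂ) ^ 2 * ht
  have hden : (c : ℂ) * cmPoint D m μ + d ≠ 0 := by
    intro h0
    have : (c : ℂ) * (μ + t) + d * m = 0 := by
      rw [cmPoint] at h0; field_simp at h0; linear_combination h0
    rw [this, zero_mul, eq_comm] at hnorm
    exact mul_ne_zero hmC (by exact_mod_cast hm') hnorm
  rw [div_eq_iff hden, cmPoint, cmPoint]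
  field_simp
  push_cast
  linear_combination (-(c : ℂ)) * ht + c * heC +
    (d * m * t + c * μ * t + c * μ ^ 2 - c * m * e) * hdetC

end FormTransform

def cmPoints (D : ℤ) : Set ℍ :=
  {z | ∃ m μ : ℤ, 0 < m ∧ μ ^ 2 ≡ D [ZMOD m] ∧ (z : ℂ) = cmPoint D m μ}

theorem smul_mem_cmPoints {D : ℤ} (hD : D < 0) (γ : SL(2, ℤ)) {z : ℍ} (hz : z ∈ cmPoints D) :
    γ • z ∈ cmPoints D := by
  obtain ⟨m, μ, hm, hμ, hz⟩ := hz
  obtain ⟨e, he⟩ : m ∣ μ ^ 2 - D := Int.modEq_iff_dvd.1 hμ.symm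
  have hdet : γ 0 0 * γ 1 1 - γ 0 1 * γ 1 0 = 1 := by
    rw [← det_fin_two]; exact γ.det_coe
  have hcd : γ 1 0 ≠ 0 ∨ γ 1 1 ≠ 0 := by
    by_contra! h
    simp [h.1, h.2] at hdet
  have hm' := formTransform_pos hD hm hcd he
  refine ⟨_, _, hm', formTransform_modEq hdet he, ?_⟩
  rw [coe_specialLinearGroup_apply, hz, ← mobius_cmPoint hD.le hdet hm.ne' he hm'.ne']
  simp

theorem finite_cmPoints_inter_fd {D : ℤ} (hD : D < 0) : (cmPoints D ∩ 𝒟).Finite := by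
  have hbox : ((Finset.Icc 1 (-2 * D) ×ˢ Finset.Icc D (-D) : Finset (ℤ × ℤ)) :
      Set (ℤ × ℤ)).Finite := Finset.finite_toSet _
  refine ((hbox.image fun p ↦ cmPoint D p.1 p.2).preimage
    coe_injective.injOn).subset ?_
  rintro z ⟨⟨m, μ, hm, -, hz⟩, hfd⟩
  refine ⟨(m, μ), ?_, hz.symm⟩
  have hmR : (0 : ℝ) < m := by exact_mod_cast hm
  have him : z.im * m = √(-D) := by
    rw [← UpperHalfPlane.coe_im, hz, cmPoint_im, div_mul_cancel₀ _ hmR.ne']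
  have hre : z.re * m = μ := by
    rw [← UpperHalfPlane.coe_re, hz, cmPoint_re, div_mul_cancel₀ _ hmR.ne']
  -- `im z ≥ √3/2` bounds `m`, and `|re z| ≤ 1/2` bounds `μ`
  have hm3 : 3 * (m : ℝ) ^ 2 ≤ -4 * D := by
    have h3 := ModularGroup.three_le_four_mul_im_sq_of_mem_fd hfd
    have hs : (z.im * m) ^ 2 = -D := by
      rw [him, Real.sq_sqrt (by exact_mod_cast (neg_pos.2 hD).le)]
    nlinarith [mul_le_mul_of_nonneg_right h3 (sq_nonneg (m : ℝ))]
  have hμ2 : 2 * |(μ : ℝ)| ≤ m := by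
    rw [← hre, abs_mul, abs_of_pos hmR]
    nlinarith [hfd.2]
  have hm3Z : 3 * m ^ 2 ≤ -4 * D := by exact_mod_cast hm3
  have hμ2Z : 2 * |μ| ≤ m := by exact_mod_cast hμ2
  have hmD : m ≤ -2 * D := by nlinarith
  have hμD := abs_le.1 (show |μ| ≤ -D by linarith)
  simp only [Finset.coe_product, Set.mem_prod, Finset.coe_Icc, Set.mem_Icc]
  exact ⟨⟨hm, hmD⟩, by linarith [hμD.1], hμD.2⟩

theorem finite_orbits_cmPoints {D : ℤ} (hD : D < 0) :
    (MulAction.orbit SL(2, ℤ) '' cmPoints D).Finite := by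
  refine ((finite_cmPoints_inter_fd hD).image (MulAction.orbit SL(2, ℤ))).subset ?_
  rintro _ ⟨z, hz, rfl⟩
  obtain ⟨g, hg⟩ := ModularGroup.exists_smul_mem_fd z
  exact ⟨g • z, ⟨smul_mem_cmPoints hD g hz, hg⟩, MulAction.orbit_smul g z⟩

theorem MulAction.exists_fin_orbit_representatives {G X : Type*} [Group G] [MulAction G X]
    {S : Set X} (hS : (orbit G '' S).Finite) :
    ∃ (h : ℕ) (z : Fin h → X), (∀ l, z l ∈ S) ∧ (∀ x ∈ S, ∃ l, ∃ g : G, g • z l = x) ∧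
      ∀ l l' (g g' : G), g • z l = g' • z l' → l = l' := by
  have := hS.to_subtype
  obtain ⟨h, ⟨e⟩⟩ := Finite.exists_equiv_fin (orbit G '' S)
  choose rep hrepS hrep using fun o : orbit G '' S ↦ o.2
  refine ⟨h, fun l ↦ rep (e.symm l), fun l ↦ hrepS _, fun x hx ↦ ?_, fun l l' g g' hgg' ↦ ?_⟩
  · refine ⟨e ⟨orbit G x, x, hx, rfl⟩, mem_orbit_iff.1 (orbit_eq_iff.1 ?_)⟩
    rw [hrep, e.symm_apply_apply]
  · refine e.symm.injective (Subtype.ext ?_)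
    rw [← hrep, ← hrep, ← orbit_smul g, hgg', orbit_smul]

theorem ModularGroup.T_mem_GammaInf : ModularGroup.T ∈ GammaInf :=
  Subgroup.subset_closure (Set.mem_insert _ _)

theorem stmt_17_general (D : ℤ) (hD : D < 0) :
    ∃ (h : ℕ) (z : Fin h → UpperHalfPlane),
      -- (i) each root corresponds to a unique `l` and double coset `Γ_∞ γ Γ_{z_l}`
      (∀ m μ : ℤ, 0 < m → μ ^ 2 ≡ D [ZMOD m] →
        (∃ (l : Fin h) (γ : SL(2, ℤ)), RootPointAt D m μ (z l) γ) ∧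
        (∀ (l l' : Fin h) (γ γ' : SL(2, ℤ)),
          RootPointAt D m μ (z l) γ → RootPointAt D m μ (z l') γ' →
            l = l' ∧ ∃ δ₁ ∈ GammaInf, ∃ δ₂ ∈ MulAction.stabilizer SL(2, ℤ) (z l),
              γ' = δ₁ * γ * δ₂)) ∧
      -- (ii) conversely each `(l, γ)` comes from a unique `(m, μ mod m)`
      (∀ (l : Fin h) (γ : SL(2, ℤ)),
        ∃ m μ : ℤ, (0 < m ∧ μ ^ 2 ≡ D [ZMOD m] ∧ RootPointAt D m μ (z l) γ) ∧
          ∀ m' μ' : ℤ, 0 < m' → μ' ^ 2 ≡ D [ZMOD m'] → RootPointAt D m' μ' (z l) γ →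
            m' = m ∧ μ' ≡ μ [ZMOD m]) := by
  obtain ⟨h, z, hzS, hcover, hsep⟩ :=
    MulAction.exists_fin_orbit_representatives (finite_orbits_cmPoints hD)
  refine ⟨h, z, fun m μ hm hμ ↦ ⟨?_, ?_⟩, fun l γ ↦ ?_⟩
  · obtain ⟨l, γ, hγ⟩ := hcover ⟨cmPoint D m μ, cmPoint_im_pos hD hm⟩ ⟨m, μ, hm, hμ, rfl⟩
    exact ⟨l, γ, rootPointAt_iff.2 ⟨0, by rw [hγ]; simp⟩⟩
  · intro l l' γ γ' hγ hγ'
    obtain ⟨k, hk⟩ := rootPointAt_iff.1 hγ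
    obtain ⟨k', hk'⟩ := rootPointAt_iff.1 hγ'
    set δ := ModularGroup.T ^ (k' - k)
    have hδ : γ' • z l' = (δ * γ) • z l := by
      rw [mul_smul]; ext
      rw [ModularGroup.coe_T_zpow_smul_eq, hk, hk']; push_cast; ring
    obtain rfl := hsep l' l γ' _ hδ
    refine ⟨rfl, δ, zpow_mem ModularGroup.T_mem_GammaInf _, (δ * γ)⁻¹ * γ', ?_, by group⟩
    rw [MulAction.mem_stabilizer_iff, mul_smul, hδ, inv_smul_smul]
  · obtain ⟨m, μ, hm, hμ, hγ⟩ := smul_mem_cmPoints hD γ (hzS l)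
    refine ⟨m, μ, ⟨hm, hμ, rootPointAt_iff.2 ⟨0, by rw [hγ]; simp⟩⟩, fun m' μ' hm' _ h' ↦ ?_⟩
    obtain ⟨k, hk⟩ := rootPointAt_iff.1 h'
    rw [hγ, ← cmPoint_add_mul hm'.ne'] at hk
    obtain ⟨rfl, rfl⟩ := cmPoint_inj hD hm hm' hk
    exact ⟨rfl, Int.modEq_iff_dvd.2 ⟨k, by ring⟩⟩

/-- for `D < 0` squarefree with `D ≢ 1 (mod 4)` (and `n = 1`), there are
points `z₁, …, z_h ∈ ℍ` such that every root `μ mod m` of `μ² ≡ D (mod m)` corresponds to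
a unique `l` and a unique double coset `Γ_∞ γ Γ_{z_l}` with
`γ·z_l ≡ μ/m + i·√(−D)/m (mod Γ_∞)`, and conversely every such double coset arises from a
unique pair `(m, μ mod m)`. -/
theorem stmt_17 (D : ℤ) (hD : D < 0) (hsf : Squarefree D) (hmod : D % 4 ≠ 1) :
    ∃ (h : ℕ) (z : Fin h → UpperHalfPlane),
      -- (i) each root corresponds to a unique `l` and double coset `Γ_∞ γ Γ_{z_l}`
      (∀ m μ : ℤ, 0 < m → μ ^ 2 ≡ D [ZMOD m] →
        (∃ (l : Fin h) (γ : SL(2, ℤ)), RootPointAt D m μ (z l) γ) ∧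
        (∀ (l l' : Fin h) (γ γ' : SL(2, ℤ)),
          RootPointAt D m μ (z l) γ → RootPointAt D m μ (z l') γ' →
            l = l' ∧ ∃ δ₁ ∈ GammaInf, ∃ δ₂ ∈ MulAction.stabilizer SL(2, ℤ) (z l),
              γ' = δ₁ * γ * δ₂)) ∧
      -- (ii) conversely each `(l, γ)` comes from a unique `(m, μ mod m)`
      (∀ (l : Fin h) (γ : SL(2, ℤ)),
        ∃ m μ : ℤ, (0 < m ∧ μ ^ 2 ≡ D [ZMOD m] ∧ RootPointAt D m μ (z l) γ) ∧
          ∀ m' μ' : ℤ, 0 < m' → μ' ^ 2 ≡ D [ZMOD m'] → RootPointAt D m' μ' (z l) γ →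
            m' = m ∧ μ' ≡ μ [ZMOD m]) :=
  stmt_17_general D hD
end

section
/- For γ = [[a,b],[c,d]] ∈ SL(2,ℤ) one has γ·i = μ/m + i/m where m = c² + d² and μ = ac + bd; moreover μ² ≡ −1 (mod m). Conversely, for any m > 0 and μ with μ² ≡ −1 (mod m), there exists γ ∈ SL(2,ℤ) with γ·i = μ/m + i/m. -/
/-!
The forward direction is the identity `(ac + bd)² + (ad - bc)² = (a² + b²)(c² + d²)`.
For the converse it suffices to find a Gaussian integer `z = c + d i` of norm `m` dividing
`μ + i`: writing `μ + i = z (a - b i)` gives `ad - bc = 1` and `ac + bd = μ`. Such a `z` is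
found by descent: replacing `μ` by its balanced residue `ν` modulo `m` gives
`ν² + 1 = m k` with `k < m`, and if `w` of norm `k` divides `ν + i = w t`, then `t` has
norm `m`, divides `m = t t̄` and hence `μ + i`.
-/

open Complex

theorem sq_add_one_eq_of_det_eq_one {R : Type*} [CommRing R] {a b c d : R}
    (h : a * d - b * c = 1) : (a * c + b * d) ^ 2 + 1 = (a ^ 2 + b ^ 2) * (c ^ 2 + d ^ 2) := by
  linear_combination (-(a * d - b * c) - 1) * h

theorem sq_add_sq_ne_zero_of_det_eq_one {R : Type*} [CommRing R] [LinearOrder R]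
    [IsStrictOrderedRing R] {a b c d : R} (h : a * d - b * c = 1) : c ^ 2 + d ^ 2 ≠ 0 := by
  intro h0
  have := sq_add_one_eq_of_det_eq_one h
  rw [h0, mul_zero] at this
  nlinarith [sq_nonneg (a * c + b * d)]

theorem mobius_apply_I {a b c d : ℤ} (h : a * d - b * c = 1) :
    ((a : ℂ) * I + b) / ((c : ℂ) * I + d) =
      (((a * c + b * d : ℤ) : ℂ) / ((c ^ 2 + d ^ 2 : ℤ) : ℂ)) + I / ((c ^ 2 + d ^ 2 : ℤ) : ℂ) := by
  have hm : ((c ^ 2 + d ^ 2 : ℤ) : ℂ) ≠ 0 := by exact_mod_cast sq_add_sq_ne_zero_of_det_eq_one h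
  have hcd : ((c : ℂ) * I + d) * (d - c * I) = ((c ^ 2 + d ^ 2 : ℤ) : ℂ) := by
    push_cast; linear_combination (-(c : ℂ) ^ 2) * I_sq
  have hne : (c : ℂ) * I + d ≠ 0 := left_ne_zero_of_mul (hcd ▸ hm)
  have hC : (a : ℂ) * d - b * c = 1 := by exact_mod_cast h
  rw [← add_div, div_eq_div_iff hne hm]
  push_cast
  linear_combination ((d : ℂ) * I - c) * hC - (c : ℂ) * I_sq

theorem sq_modEq_neg_one_of_det_eq_one {a b c d : ℤ} (h : a * d - b * c = 1) :
    (a * c + b * d) ^ 2 ≡ -1 [ZMOD (c ^ 2 + d ^ 2)] :=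
  Int.modEq_iff_dvd.mpr ⟨-(a ^ 2 + b ^ 2), by linear_combination -sq_add_one_eq_of_det_eq_one h⟩

theorem exists_bmod_descent {n : ℕ} {μ : ℤ} (hn : 2 ≤ n) (h : (n : ℤ) ∣ μ ^ 2 + 1) :
    ∃ ν : ℤ, ∃ k : ℕ, 0 < k ∧ k < n ∧ (n : ℤ) ∣ ν - μ ∧ ν ^ 2 + 1 = n * k := by
  set ν := μ.bmod n
  have hνμ : (n : ℤ) ∣ ν - μ := Int.dvd_bmod_sub_self
  have hsmall : 4 * ν ^ 2 ≤ n ^ 2 := by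
    have h1 := Int.le_bmod (x := μ) (m := n) (by omega)
    have h2 := Int.bmod_le (x := μ) (m := n) (by omega)
    have : -(n : ℤ) ≤ 2 * ν ∧ 2 * ν ≤ n := by omega
    nlinarith
  obtain ⟨k, hk⟩ : (n : ℤ) ∣ ν ^ 2 + 1 := by
    have : ν ^ 2 + 1 = μ ^ 2 + 1 + (ν - μ) * (ν + μ) := by ring
    rw [this]; exact dvd_add h (dvd_mul_of_dvd_left hνμ _)
  have hk0 : 0 < k := by nlinarith [sq_nonneg ν]
  lift k to ℕ using hk0.le
  refine ⟨ν, k, by exact_mod_cast hk0, ?_, hνμ, hk⟩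
  have : (k : ℤ) < n := by nlinarith
  exact_mod_cast this

theorem GaussianInt.norm_mk (x y : ℤ) : (⟨x, y⟩ : GaussianInt).norm = x ^ 2 + y ^ 2 := by
  rw [Zsqrtd.norm_def]; ring

theorem GaussianInt.exists_norm_eq_dvd_of_dvd_sq_add_one (n : ℕ) (μ : ℤ) (hn : 0 < n)
    (h : (n : ℤ) ∣ μ ^ 2 + 1) : ∃ z : GaussianInt, z.norm = n ∧ z ∣ ⟨μ, 1⟩ := by
  induction n using Nat.strong_induction_on generalizing μ with
  | _ n ih =>
  obtain rfl | hn2 : n = 1 ∨ 2 ≤ n := by omega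
  · exact ⟨1, Zsqrtd.norm_one, one_dvd _⟩
  obtain ⟨ν, k, hk0, hkn, hνμ, hνk⟩ := exists_bmod_descent hn2 h
  obtain ⟨w, hw, t, hwt⟩ := ih k hkn ν hk0 ⟨n, by rw [hνk, mul_comm]⟩
  have ht : t.norm = n := by
    have := congrArg Zsqrtd.norm hwt
    rw [GaussianInt.norm_mk, Zsqrtd.norm_mul, hw, one_pow, hνk, mul_comm] at this
    exact mul_left_cancel₀ (a := (k : ℤ)) (by exact_mod_cast hk0.ne') this.symm
  have htn : t ∣ ((n : ℤ) : GaussianInt) := ⟨star t, by rw [← ht, Zsqrtd.norm_eq_mul_conj]⟩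
  have hsplit : (⟨μ, 1⟩ : GaussianInt) = ⟨ν, 1⟩ - ((ν - μ : ℤ) : GaussianInt) := by
    ext <;> simp
  refine ⟨t, ht, hsplit ▸ dvd_sub (hwt ▸ dvd_mul_left t w) (htn.trans ?_)⟩
  exact Int.cast_dvd_cast _ _ hνμ

theorem exists_det_eq_one_of_dvd_sq_add_one {m μ : ℤ} (hm : 0 < m) (h : m ∣ μ ^ 2 + 1) :
    ∃ a b c d : ℤ, a * d - b * c = 1 ∧ a * c + b * d = μ ∧ c ^ 2 + d ^ 2 = m := by
  lift m to ℕ using hm.le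
  obtain ⟨z, hz, u, hzu⟩ :=
    GaussianInt.exists_norm_eq_dvd_of_dvd_sq_add_one m μ (by exact_mod_cast hm) h
  have hre := congrArg Zsqrtd.re hzu
  have him := congrArg Zsqrtd.im hzu
  simp only [Zsqrtd.re_mul, Zsqrtd.im_mul] at hre him
  refine ⟨u.re, -u.im, z.re, z.im, by linear_combination -him, by linear_combination -hre, ?_⟩
  rw [← hz, ← GaussianInt.norm_mk]

/-- for `[[a,b],[c,d]] ∈ SL(2,ℤ)` one has
`(a·i+b)/(c·i+d) = μ/m + i/m` with `m = c²+d²`, `μ = ac+bd`, and `μ² ≡ −1 (mod m)`;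
conversely every root `μ` of `μ² ≡ −1 (mod m)`, `m > 0`, arises this way. -/
theorem stmt_18 :
    (∀ a b c d : ℤ, a * d - b * c = 1 →
      ((a : ℂ) * Complex.I + b) / ((c : ℂ) * Complex.I + d) =
        (((a * c + b * d : ℤ) : ℂ) / ((c ^ 2 + d ^ 2 : ℤ) : ℂ)) +
          Complex.I / ((c ^ 2 + d ^ 2 : ℤ) : ℂ) ∧
      (a * c + b * d) ^ 2 ≡ -1 [ZMOD (c ^ 2 + d ^ 2)]) ∧
    (∀ m μ : ℤ, 0 < m → μ ^ 2 ≡ -1 [ZMOD m] →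
      ∃ a b c d : ℤ, a * d - b * c = 1 ∧
        ((a : ℂ) * Complex.I + b) / ((c : ℂ) * Complex.I + d) =
          ((μ : ℂ) / (m : ℂ)) + Complex.I / (m : ℂ)) := by
  refine ⟨fun a b c d h => ⟨mobius_apply_I h, sq_modEq_neg_one_of_det_eq_one h⟩, ?_⟩
  intro m μ hm hμ
  have hdvd : m ∣ μ ^ 2 + 1 := by simpa using (Int.modEq_iff_dvd.mp hμ.symm)
  obtain ⟨a, b, c, d, h, rfl, rfl⟩ := exists_det_eq_one_of_dvd_sq_add_one hm hdvd
  exact ⟨a, b, c, d, h, mobius_apply_I h⟩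
end
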